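/- arXiv:1403.5891 — 9 statements merged into one kernel-verified Lean document; each statement's English description precedes it below -/
import Mathlib

section
/- Suppose s is absolutely continuous with respect to t, and let (H_s, ι_s) be a realization of the Hilbert space associated with s. Then for every f ∈ H_s there exists a sequence (x_n) in D such that ⟨ι_s x, f⟩ = lim_{n→∞} t(x, x_n) for all x ∈ D; moreover the convergence is uniform on the set {x ∈ D : s(x,x) + t(x,x) ≤ 1}, i.e. sup{|⟨ι_s x, f⟩ − t(x, x_n)| : x ∈ D, s(x,x) + t(x,x) ≤ 1} → 0 as n → ∞. -/
/-!
Let `r = s + t` and let `(K, e)` realize `r`. Since `s ≤ r`, the map `ι` extends to a contraction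
`J : K → H`, and `A = 1 - J†J` represents `t` on `K`: `⟪A (e x), e y⟫ = t y x`. Absolute continuity
of `s` with respect to `t` makes `A` injective: if `A k = 0` and `e xₙ → k`, then
`t xₙ xₙ → ⟪A k, k⟫ = 0` and `ι xₙ → J k` is Cauchy, so `‖J k‖² = lim s xₙ xₙ = 0` and
`‖k‖² = ‖J k‖² = 0`. Being self-adjoint and injective, `A` has dense range, so `A (e xₙ) → J† f`
for some `xₙ ∈ D`, and `⟪f, ι y⟫ - t y xₙ = ⟪J† f - A (e xₙ), e y⟫` is at most
`‖J† f - A (e xₙ)‖ * √(r y y)`.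
-/

open Filter Topology
open scoped ComplexInnerProductSpace

/-- `s : D → D → ℂ` is a nonnegative Hermitian form: linear in the first argument,
conjugate-symmetric, and with nonnegative diagonal. -/
def IsNonnegHermForm {D : Type*} [AddCommGroup D] [Module ℂ D] (s : D → D → ℂ) : Prop :=
  (∀ x y z : D, s (x + y) z = s x z + s y z) ∧
  (∀ (c : ℂ) (x y : D), s (c • x) y = c * s x y) ∧
  (∀ x y : D, s x y = (starRingEnd ℂ) (s y x)) ∧
  (∀ x : D, 0 ≤ (s x x).re)

/-- `s` is absolutely continuous with respect to `t`. -/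
def FormAC {D : Type*} [AddCommGroup D] [Module ℂ D] (s t : D → D → ℂ) : Prop :=
  ∀ x : ℕ → D,
    Tendsto (fun n => t (x n) (x n)) atTop (𝓝 0) →
    Tendsto (fun p : ℕ × ℕ => s (x p.1 - x p.2) (x p.1 - x p.2)) atTop (𝓝 0) →
    Tendsto (fun n => s (x n) (x n)) atTop (𝓝 0)

universe u

namespace IsNonnegHermForm

variable {D : Type u} [AddCommGroup D] [Module ℂ D] {s t : D → D → ℂ}

lemma map_add_right (hs : IsNonnegHermForm s) (x y z : D) : s z (x + y) = s z x + s z y := by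
  rw [hs.2.2.1, hs.1, map_add, ← hs.2.2.1, ← hs.2.2.1]

lemma map_smul_right (hs : IsNonnegHermForm s) (c : ℂ) (x y : D) :
    s y (c • x) = starRingEnd ℂ c * s y x := by
  rw [hs.2.2.1, hs.2.1, map_mul, ← hs.2.2.1]

lemma add (hs : IsNonnegHermForm s) (ht : IsNonnegHermForm t) : IsNonnegHermForm (s + t) := by
  refine ⟨fun x y z => ?_, fun c x y => ?_, fun x y => ?_, fun x => ?_⟩
  · simp only [Pi.add_apply, hs.1, ht.1]; ring
  · simp only [Pi.add_apply, hs.2.1, ht.2.1]; ring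
  · simp only [Pi.add_apply, map_add, ← hs.2.2.1, ← ht.2.2.1]
  · simpa only [Pi.add_apply, Complex.add_re] using add_nonneg (hs.2.2.2 x) (ht.2.2.2 x)

/-- The pre-inner product `⟪x, y⟫ := s y x`: Mathlib's inner product is conjugate-linear in its
first argument, the form in its second. -/
abbrev toCore (hs : IsNonnegHermForm s) : PreInnerProductSpace.Core ℂ D where
  inner x y := s y x
  conj_inner_symm x y := (hs.2.2.1 y x).symm
  re_inner_nonneg x := hs.2.2.2 x
  add_left x y z := hs.map_add_right x y z
  smul_left x y c := hs.map_smul_right c x y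

open UniformSpace in
lemma exists_realization (hs : IsNonnegHermForm s) :
    ∃ (K : Type u) (_ : NormedAddCommGroup K) (_ : InnerProductSpace ℂ K) (_ : CompleteSpace K)
      (e : D →ₗ[ℂ] K), DenseRange e ∧ ∀ x y, ⟪e y, e x⟫ = s x y := by
  let := hs.toCore
  let : SeminormedAddCommGroup D := InnerProductSpace.Core.toSeminormedAddCommGroup (𝕜 := ℂ)
  let : InnerProductSpace ℂ D := .ofCore _
  refine ⟨Completion D, inferInstance, inferInstance, inferInstance,
    (Completion.toComplL (𝕜 := ℂ)).toLinearMap, Completion.denseRange_coe, fun x y => ?_⟩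
  exact Completion.inner_coe y x

end IsNonnegHermForm

lemma DenseRange.exists_seq_tendsto {α X : Type*} [TopologicalSpace X] [FrechetUrysohnSpace X]
    {g : α → X} (hg : DenseRange g) (k : X) : ∃ x : ℕ → α, Tendsto (g ∘ x) atTop (𝓝 k) := by
  obtain ⟨y, hy, hlim⟩ := mem_closure_iff_seq_limit.1 (hg k)
  choose x hx using hy
  exact ⟨x, by simpa only [Function.comp_def, hx] using hlim⟩

namespace ContinuousLinearMap

open scoped InnerProduct

variable {𝕜 K H : Type*} [RCLike 𝕜] [NormedAddCommGroup K] [InnerProductSpace 𝕜 K]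
  [CompleteSpace K] [NormedAddCommGroup H] [InnerProductSpace 𝕜 H] [CompleteSpace H]

lemma _root_.IsSelfAdjoint.denseRange_of_injective {A : K →L[𝕜] K} (hA : IsSelfAdjoint A)
    (hinj : Function.Injective A) : DenseRange A := by
  have hclosure : A.range.topologicalClosure = ⊤ := by
    rw [← hA.adjoint_eq, ← orthogonal_ker, LinearMap.ker_eq_bot.2 hinj,
      Submodule.bot_orthogonal_eq_top]
  exact Submodule.dense_iff_topologicalClosure_eq_top.2 hclosure

lemma isSelfAdjoint_one_sub_adjoint_comp_self (J : K →L[𝕜] H) : IsSelfAdjoint (1 - J† ∘L J) :=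
  (IsSelfAdjoint.one _).sub (isPositive_adjoint_comp_self J).isSelfAdjoint

lemma inner_one_sub_adjoint_comp_self_apply (J : K →L[𝕜] H) (u v : K) :
    inner 𝕜 ((1 - J† ∘L J) u) v = inner 𝕜 u v - inner 𝕜 (J u) (J v) := by
  rw [sub_apply, one_apply_eq_self, inner_sub_left, comp_apply, adjoint_inner_left]

end ContinuousLinearMap

section Realization

open ContinuousLinearMap
open scoped InnerProduct

variable {D K H : Type*} [AddCommGroup D] [Module ℂ D]
  [NormedAddCommGroup K] [InnerProductSpace ℂ K] [NormedAddCommGroup H] [InnerProductSpace ℂ H]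
  {s t : D → D → ℂ} {e : D →ₗ[ℂ] K} {ι : D →ₗ[ℂ] H} {J : K →L[ℂ] H}

lemma norm_le_norm_of_realization (he : ∀ x y, ⟪e y, e x⟫ = s x y + t x y)
    (hι : ∀ x y, ⟪ι y, ι x⟫ = s x y) (ht : ∀ x, 0 ≤ (t x x).re) (x : D) : ‖ι x‖ ≤ ‖e x‖ := by
  refine le_of_pow_le_pow_left₀ two_ne_zero (norm_nonneg _) ?_
  rw [norm_sq_eq_re_inner (𝕜 := ℂ), norm_sq_eq_re_inner (𝕜 := ℂ), he, hι, RCLike.re_to_complex,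
    RCLike.re_to_complex, Complex.add_re]
  linarith [ht x]

variable [CompleteSpace K] [CompleteSpace H]

lemma inner_one_sub_adjoint_comp_self_apply_of_realization
    (he : ∀ x y, ⟪e y, e x⟫ = s x y + t x y) (hι : ∀ x y, ⟪ι y, ι x⟫ = s x y)
    (hJ : ∀ x, J (e x) = ι x) (x y : D) : ⟪(1 - J† ∘L J) (e x), e y⟫ = t y x := by
  rw [inner_one_sub_adjoint_comp_self_apply, hJ, hJ, he, hι]
  ring

lemma injective_one_sub_adjoint_comp_self_of_formAC (hac : FormAC s t) (he_dense : DenseRange e)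
    (he : ∀ x y, ⟪e y, e x⟫ = s x y + t x y) (hι : ∀ x y, ⟪ι y, ι x⟫ = s x y)
    (hJ : ∀ x, J (e x) = ι x) : Function.Injective (1 - J† ∘L J : K →L[ℂ] K) := by
  set A := 1 - J† ∘L J
  have hA : ∀ x y, ⟪A (e x), e y⟫ = t y x :=
    inner_one_sub_adjoint_comp_self_apply_of_realization he hι hJ
  refine (injective_iff_map_eq_zero A).2 fun k hk => ?_
  obtain ⟨x, hx⟩ := he_dense.exists_seq_tendsto k
  have hιx : Tendsto (ι ∘ x) atTop (𝓝 (J k)) := by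
    simpa only [Function.comp_def, hJ] using (J.continuous.tendsto k).comp hx
  have ht_lim : Tendsto (fun n => t (x n) (x n)) atTop (𝓝 0) := by
    simpa only [Function.comp_def, hA, hk, inner_zero_left]
      using ((A.continuous.tendsto k).comp hx).inner (𝕜 := ℂ) hx
  have hs_lim : Tendsto (fun n => s (x n) (x n)) atTop (𝓝 ⟪J k, J k⟫) := by
    simpa only [Function.comp_def, hι] using hιx.inner (𝕜 := ℂ) hιx
  have hs_diff : Tendsto (fun p : ℕ × ℕ => s (x p.1 - x p.2) (x p.1 - x p.2)) atTop (𝓝 0) := by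
    rw [← prod_atTop_atTop_eq]
    have hdiff := (hιx.comp tendsto_fst).sub (hιx.comp tendsto_snd)
    rw [sub_self] at hdiff
    simpa only [Function.comp_def, ← map_sub, hι, inner_zero_left]
      using hdiff.inner (𝕜 := ℂ) hdiff
  have hJk : ⟪J k, J k⟫ = 0 := tendsto_nhds_unique hs_lim (hac x ht_lim hs_diff)
  have hk_inner := inner_one_sub_adjoint_comp_self_apply J k k
  rw [hk, inner_zero_left, hJk, sub_zero] at hk_inner
  exact inner_self_eq_zero.1 hk_inner.symm

lemma norm_inner_sub_le_of_realization (he : ∀ x y, ⟪e y, e x⟫ = s x y + t x y)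
    (hι : ∀ x y, ⟪ι y, ι x⟫ = s x y) (hJ : ∀ x, J (e x) = ι x) (f : H) (x y : D) :
    ‖⟪f, ι y⟫ - t y x‖ ≤ ‖(J†) f - (1 - J† ∘L J) (e x)‖ * ‖e y‖ := by
  rw [← inner_one_sub_adjoint_comp_self_apply_of_realization he hι hJ, ← hJ, ← adjoint_inner_left,
    ← inner_sub_left]
  exact norm_inner_le_norm _ _

theorem exists_seq_norm_inner_sub_le_of_realization (hac : FormAC s t) (he_dense : DenseRange e)
    (he : ∀ x y, ⟪e y, e x⟫ = s x y + t x y) (hι : ∀ x y, ⟪ι y, ι x⟫ = s x y)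
    (ht : ∀ x, 0 ≤ (t x x).re) (f : H) :
    ∃ x : ℕ → D, ∃ δ : ℕ → ℝ, Tendsto δ atTop (𝓝 0) ∧
      ∀ n y, ‖⟪f, ι y⟫ - t y (x n)‖ ≤ δ n * ‖e y‖ := by
  set J : K →L[ℂ] H := ι.extendOfNorm e
  have hJ : ∀ x, J (e x) = ι x := LinearMap.extendOfNorm_eq he_dense
    ⟨1, fun x => (one_mul ‖e x‖).symm ▸ norm_le_norm_of_realization he hι ht x⟩
  set A := 1 - J† ∘L J
  have hA_dense : DenseRange A :=
    (isSelfAdjoint_one_sub_adjoint_comp_self J).denseRange_of_injective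
      (injective_one_sub_adjoint_comp_self_of_formAC hac he_dense he hι hJ)
  obtain ⟨x, hx⟩ := (hA_dense.comp he_dense A.continuous).exists_seq_tendsto ((J†) f)
  refine ⟨x, fun n => ‖(J†) f - A (e (x n))‖, ?_,
    fun n y => norm_inner_sub_le_of_realization he hι hJ f (x n) y⟩
  simpa only [Function.comp_apply, norm_sub_rev] using tendsto_iff_norm_sub_tendsto_zero.1 hx

end Realization

/-- For the paper's inner product `⟨·,·⟩`, linear in the first variable, `⟨a, b⟩ = ⟪b, a⟫`. -/
theorem radon_nikodym_forms_general
    {D : Type*} [AddCommGroup D] [Module ℂ D]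
    (s t : D → D → ℂ) (hs : IsNonnegHermForm s) (ht : IsNonnegHermForm t)
    (hac : FormAC s t)
    {H : Type*} [NormedAddCommGroup H] [InnerProductSpace ℂ H] [CompleteSpace H]
    (ι : D →ₗ[ℂ] H)
    (hreal : ∀ x y : D, ⟪ι y, ι x⟫ = s x y)
    (f : H) :
    ∃ x : ℕ → D,
      (∀ y : D, Tendsto (fun n => t y (x n)) atTop (𝓝 ⟪f, ι y⟫)) ∧
      (∀ ε : ℝ, 0 < ε → ∃ N : ℕ, ∀ n ≥ N, ∀ y : D,
        (s y y).re + (t y y).re ≤ 1 → ‖⟪f, ι y⟫ - t y (x n)‖ ≤ ε) := by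
  obtain ⟨K, _, _, _, e, he_dense, he⟩ := (hs.add ht).exists_realization
  obtain ⟨x, δ, hδ, hle⟩ :=
    exists_seq_norm_inner_sub_le_of_realization hac he_dense he hreal ht.2.2.2 f
  refine ⟨x, fun y => ?_, fun ε hε => ?_⟩
  · refine tendsto_iff_norm_sub_tendsto_zero.2 (squeeze_zero (fun _ => norm_nonneg _)
      (fun n => ?_) (by simpa only [zero_mul] using hδ.mul_const ‖e y‖))
    rw [norm_sub_rev]
    exact hle n y
  · obtain ⟨N, hN⟩ := eventually_atTop.1 (hδ.eventually (ge_mem_nhds hε))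
    refine ⟨N, fun n hn y hy => (hle n y).trans ?_⟩
    have hey : ‖e y‖ ≤ 1 := by
      rw [← sq_le_one_iff₀ (norm_nonneg _), norm_sq_eq_re_inner (𝕜 := ℂ), he]
      simpa only [Pi.add_apply, RCLike.re_to_complex, Complex.add_re] using hy
    simpa only [mul_one] using mul_le_mul (hN n hn) hey (norm_nonneg _) hε.le

/-- **Theorem (Radon–Nikodym for forms).** If `s` is absolutely continuous with respect to `t`
and `(H, ι)` is a realization of the Hilbert space associated with `s`, then for every `f ∈ H`
there is a sequence `(x n)` in `D` with `⟨ι x, f⟩ = lim_n t (x, x n)` for every `x ∈ D`, and the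
convergence is uniform on `{x : s(x,x) + t(x,x) ≤ 1}`.
(Here, for a paper-style inner product `⟨·,·⟩` linear in the first variable, `⟨a, b⟩ = ⟪b, a⟫`
in Mathlib's convention, which is linear in the second variable.) -/
theorem radon_nikodym_forms
    {D : Type*} [AddCommGroup D] [Module ℂ D]
    (s t : D → D → ℂ) (hs : IsNonnegHermForm s) (ht : IsNonnegHermForm t)
    (hac : FormAC s t)
    {H : Type*} [NormedAddCommGroup H] [InnerProductSpace ℂ H] [CompleteSpace H]
    (ι : D →ₗ[ℂ] H) (hdense : DenseRange ι)
    (hreal : ∀ x y : D, ⟪ι y, ι x⟫ = s x y)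
    (f : H) :
    ∃ x : ℕ → D,
      (∀ y : D, Tendsto (fun n => t y (x n)) atTop (𝓝 ⟪f, ι y⟫)) ∧
      (∀ ε : ℝ, 0 < ε → ∃ N : ℕ, ∀ n ≥ N, ∀ y : D,
        (s y y).re + (t y y).re ≤ 1 → ‖⟪f, ι y⟫ - t y (x n)‖ ≤ ε) :=
  radon_nikodym_forms_general s t hs ht hac ι hreal f
end

section
/- Let D = C([−1,1]; ℂ) be the space of continuous complex-valued functions on [−1,1], and define the nonnegative Hermitian forms s(φ,ψ) = φ(0)·conj(ψ(0)) and t(φ,ψ) = ∫_{[−1,1]} φ·conj(ψ) dλ (λ the Lebesgue measure). Then: (a) there exists a sequence (φ_n) in D such that φ(0) = lim_{n→∞} ∫_{[−1,1]} φ·conj(φ_n) dλ for every φ ∈ D (so s is pseudo-absolutely continuous with respect to t, the associated Hilbert space of s being one-dimensional); and (b) s and t are mutually singular: every nonnegative Hermitian form w on D with w(φ,φ) ≤ s(φ,φ) and w(φ,φ) ≤ t(φ,φ) for all φ ∈ D is identically zero. In particular, pseudo-absolute continuity does not imply absolute continuity. -/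
/-!
The kernels `(1 - x²)ⁿ`, normalised to have integral one on `[-1, 1]`, are peak functions
concentrating at `0`, so integrating `φ` against them tends to `φ 0`; this is (a).

For (b), split `φ = (φ - φ (1 - x²)ⁿ) + φ (1 - x²)ⁿ`. The first summand vanishes at `0`, so it is
`s`-null and hence, by `w ≤ s` and Cauchy–Schwarz for `w`, also `w`-null. Therefore
`w(φ, φ) = w(φ (1 - x²)ⁿ, φ (1 - x²)ⁿ) ≤ ∫ |φ|² (1 - x²)²ⁿ`, which tends to `0` by dominated
convergence. So `w` vanishes on the diagonal, and by Cauchy–Schwarz everywhere.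
-/

open Filter Topology MeasureTheory
open scoped ComplexInnerProductSpace

attribute [local instance] MeasureTheory.Measure.Subtype.measureSpace

namespace IsNonnegHermForm

variable {D : Type*} [AddCommGroup D] [Module ℂ D] {w : D → D → ℂ}

theorem norm_apply_sq_le (hw : IsNonnegHermForm w) (x y : D) :
    ‖w x y‖ ^ 2 ≤ (w x x).re * (w y y).re := by
  -- Mathlib's inner products are conjugate-linear in the first argument, hence the swap.
  let _ : PreInnerProductSpace.Core ℂ D :=
    { inner a b := w b a
      conj_inner_symm a b := (hw.2.2.1 b a).symm
      re_inner_nonneg a := hw.2.2.2 a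
      add_left a b c := by rw [hw.2.2.1 c (a + b), hw.1, map_add, ← hw.2.2.1, ← hw.2.2.1]
      smul_left a b r := by rw [hw.2.2.1 b (r • a), hw.2.1, map_mul, ← hw.2.2.1] }
  have hnorm : ‖w y x‖ = ‖w x y‖ := by rw [hw.2.2.1 y x, Complex.norm_conj]
  calc ‖w x y‖ ^ 2 = ‖w y x‖ * ‖w x y‖ := by rw [hnorm, sq]
    _ ≤ (w x x).re * (w y y).re := InnerProductSpace.Core.inner_mul_inner_self_le (𝕜 := ℂ) x y

theorem apply_eq_zero_of_re_apply_self_eq_zero (hw : IsNonnegHermForm w) {x : D}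
    (hx : (w x x).re = 0) (y : D) : w x y = 0 := by
  have h := hw.norm_apply_sq_le x y
  rw [hx, zero_mul] at h
  exact norm_eq_zero.1 (pow_eq_zero_iff two_ne_zero |>.1 (le_antisymm h (sq_nonneg _)))

theorem apply_add_self_of_re_apply_self_eq_zero (hw : IsNonnegHermForm w) {x : D}
    (hx : (w x x).re = 0) (y : D) : w (x + y) (x + y) = w y y := by
  have h0 := hw.apply_eq_zero_of_re_apply_self_eq_zero hx
  rw [hw.1, h0, zero_add, hw.2.2.1, hw.1, h0, zero_add, ← hw.2.2.1]

theorem eq_zero_of_le_of_le (hw : IsNonnegHermForm w) {s t : D → D → ℂ}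
    (hws : ∀ x, (w x x).re ≤ (s x x).re) (hwt : ∀ x, (w x x).re ≤ (t x x).re)
    (hst : ∀ x, ∃ y : ℕ → D, (∀ n, (s (x - y n) (x - y n)).re = 0) ∧
      Tendsto (fun n => (t (y n) (y n)).re) atTop (𝓝 0))
    (x y : D) : w x y = 0 := by
  refine hw.apply_eq_zero_of_re_apply_self_eq_zero (le_antisymm ?_ (hw.2.2.2 x)) y
  obtain ⟨z, hsz, htz⟩ := hst x
  have hwz (n : ℕ) : (w x x).re = (w (z n) (z n)).re := by
    have hnull : (w (x - z n) (x - z n)).re = 0 :=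
      le_antisymm ((hws _).trans (hsz n).le) (hw.2.2.2 _)
    rw [← hw.apply_add_self_of_re_apply_self_eq_zero hnull (z n), sub_add_cancel]
  exact le_of_tendsto_of_tendsto' tendsto_const_nhds htz fun n => (hwz n).trans_le (hwt _)

end IsNonnegHermForm

theorem re_integral_mul_conj_self {X : Type*} [MeasurableSpace X] (μ : Measure X) (f : X → ℂ) :
    (∫ x, f x * (starRingEnd ℂ) (f x) ∂μ).re = ∫ x, ‖f x‖ ^ 2 ∂μ := by
  have h (x : X) : f x * (starRingEnd ℂ) (f x) = ((‖f x‖ ^ 2 : ℝ) : ℂ) := by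
    rw [Complex.mul_conj', Complex.ofReal_pow]
  simp_rw [h]
  rw [integral_complex_ofReal, Complex.ofReal_re]

theorem tendsto_integral_pow_mul_of_lt_one {X : Type*} [MeasurableSpace X] {μ : Measure X}
    {c f : X → ℝ} (hcm : AEStronglyMeasurable c μ) (hc : ∀ᵐ x ∂μ, 0 ≤ c x ∧ c x < 1)
    (hf : Integrable f μ) :
    Tendsto (fun n : ℕ => ∫ x, c x ^ n * f x ∂μ) atTop (𝓝 0) := by
  have hlim : ∀ᵐ x ∂μ, Tendsto (fun n : ℕ => c x ^ n * f x) atTop (𝓝 0) := by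
    filter_upwards [hc] with x hx
    simpa using (tendsto_pow_atTop_nhds_zero_of_lt_one hx.1 hx.2).mul_const (f x)
  have hbound (n : ℕ) : ∀ᵐ x ∂μ, ‖c x ^ n * f x‖ ≤ ‖f x‖ := by
    filter_upwards [hc] with x hx
    rw [norm_mul, norm_pow, Real.norm_of_nonneg hx.1]
    exact mul_le_of_le_one_left (norm_nonneg _) (pow_le_one₀ hx.1 hx.2.le)
  simpa using tendsto_integral_of_dominated_convergence _
    (fun n => (hcm.pow n).mul hf.1) hf.norm hbound hlim

open Set

theorem one_sub_sq_nonneg_of_mem_Icc {x : ℝ} (hx : x ∈ Icc (-1 : ℝ) 1) : 0 ≤ 1 - x ^ 2 := by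
  nlinarith [hx.1, hx.2]

theorem one_sub_sq_lt_one {x : ℝ} (hx : x ≠ 0) : 1 - x ^ 2 < 1 :=
  sub_lt_self 1 (by positivity)

def oneSubSqPow (n : ℕ) : C(Icc (-1 : ℝ) 1, ℂ) :=
  ⟨fun x => ((1 - (x : ℝ) ^ 2) ^ n : ℝ), by fun_prop⟩

theorem oneSubSqPow_apply (n : ℕ) (x : Icc (-1 : ℝ) 1) :
    oneSubSqPow n x = ((1 - (x : ℝ) ^ 2) ^ n : ℝ) :=
  rfl

theorem tendsto_integral_mul_conj_smul_oneSubSqPow (φ : C(Icc (-1 : ℝ) 1, ℂ)) :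
    Tendsto (fun n : ℕ => ∫ x : Icc (-1 : ℝ) 1,
        φ x * starRingEnd ℂ (((∫ y in Icc (-1 : ℝ) 1, (1 - y ^ 2) ^ n)⁻¹ • oneSubSqPow n) x))
      atTop (𝓝 (φ ⟨0, by norm_num⟩)) := by
  set g := IccExtend (by norm_num : (-1 : ℝ) ≤ 1) φ
  have hg : Continuous g := φ.continuous.Icc_extend'
  have hg0 : g 0 = φ ⟨0, by norm_num⟩ := IccExtend_of_mem _ φ _
  have hpeak := tendsto_setIntegral_pow_smul_of_unique_maximum_of_isCompact_of_continuousOn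
    (μ := volume) (isCompact_Icc (a := -1) (b := 1)) (c := fun x : ℝ => 1 - x ^ 2) (x₀ := 0)
    (g := g) (by fun_prop) (fun y _ hy => by simpa using one_sub_sq_lt_one hy)
    (fun x hx => one_sub_sq_nonneg_of_mem_Icc hx) (by norm_num)
    (by rw [interior_Icc]; exact subset_closure (by norm_num))
    hg.continuousOn
  rw [hg0] at hpeak
  refine hpeak.congr fun n => ?_
  rw [← integral_smul, ← integral_subtype measurableSet_Icc]
  congr with x
  simp only [g, IccExtend_val, ContinuousMap.coe_smul, Pi.smul_apply, oneSubSqPow_apply,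
    Complex.real_smul, map_mul, Complex.conj_ofReal]
  ring

theorem tendsto_integral_norm_mul_oneSubSqPow_sq (φ : C(Icc (-1 : ℝ) 1, ℂ)) :
    Tendsto (fun n => ∫ x : Icc (-1 : ℝ) 1, ‖(φ * oneSubSqPow n) x‖ ^ 2) atTop (𝓝 0) := by
  set g := IccExtend (by norm_num : (-1 : ℝ) ≤ 1) φ
  have h (n : ℕ) : ∫ x : Icc (-1 : ℝ) 1, ‖(φ * oneSubSqPow n) x‖ ^ 2 =
      ∫ x in Icc (-1 : ℝ) 1, ((1 - x ^ 2) ^ 2) ^ n * ‖g x‖ ^ 2 := by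
    rw [← integral_subtype measurableSet_Icc]
    congr with x
    have hc := pow_nonneg (one_sub_sq_nonneg_of_mem_Icc x.2) n
    rw [ContinuousMap.mul_apply, norm_mul, oneSubSqPow_apply, Complex.norm_real,
      Real.norm_of_nonneg hc, show g x = φ x from IccExtend_val _ φ x, mul_pow,
      pow_right_comm _ n 2, mul_comm]
  simp_rw [h]
  refine tendsto_integral_pow_mul_of_lt_one (by fun_prop) ?_
    (φ.continuous.Icc_extend'.norm.pow 2).integrableOn_Icc
  filter_upwards [ae_restrict_mem measurableSet_Icc, ae_restrict_of_ae (Measure.ae_ne volume 0)]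
    with x hx hx0
  exact ⟨by positivity,
    pow_lt_one₀ (one_sub_sq_nonneg_of_mem_Icc hx) (one_sub_sq_lt_one hx0) two_ne_zero⟩

/-- **Example.** On `D = C([-1,1]; ℂ)` with `s (φ, ψ) = φ(0) conj (ψ(0))` and
`t (φ, ψ) = ∫ φ conj ψ dλ`: (a) there is a sequence `(φ n)` in `D` with
`φ(0) = lim_n ∫ φ conj (φ n) dλ` for every `φ` (pseudo-absolute continuity of `s`
with respect to `t`), while (b) the forms `s` and `t` are mutually singular: any
nonnegative Hermitian form `w` with `w ≤ s` and `w ≤ t` on the diagonal vanishes. -/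
theorem pseudo_abs_continuity_not_abs_continuity
    (s t : C(Set.Icc (-1 : ℝ) 1, ℂ) → C(Set.Icc (-1 : ℝ) 1, ℂ) → ℂ)
    (hs : ∀ φ ψ : C(Set.Icc (-1 : ℝ) 1, ℂ),
      s φ ψ = φ ⟨0, by norm_num⟩ * (starRingEnd ℂ) (ψ ⟨0, by norm_num⟩))
    (ht : ∀ φ ψ : C(Set.Icc (-1 : ℝ) 1, ℂ),
      t φ ψ = ∫ x : Set.Icc (-1 : ℝ) 1, φ x * (starRingEnd ℂ) (ψ x)) :
    (∃ φs : ℕ → C(Set.Icc (-1 : ℝ) 1, ℂ),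
      ∀ φ : C(Set.Icc (-1 : ℝ) 1, ℂ),
        Tendsto (fun n => t φ (φs n)) atTop (𝓝 (φ ⟨0, by norm_num⟩))) ∧
    (∀ w : C(Set.Icc (-1 : ℝ) 1, ℂ) → C(Set.Icc (-1 : ℝ) 1, ℂ) → ℂ,
      IsNonnegHermForm w →
      (∀ φ, (w φ φ).re ≤ (s φ φ).re) →
      (∀ φ, (w φ φ).re ≤ (t φ φ).re) →
      ∀ φ ψ, w φ ψ = 0) := by
  refine ⟨⟨fun n => (∫ y in Icc (-1 : ℝ) 1, (1 - y ^ 2) ^ n)⁻¹ • oneSubSqPow n, fun φ => ?_⟩,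
    fun w hw hws hwt => ?_⟩
  · simpa only [ht] using tendsto_integral_mul_conj_smul_oneSubSqPow φ
  · refine hw.eq_zero_of_le_of_le hws hwt fun φ => ⟨fun n => φ * oneSubSqPow n, fun n => ?_, ?_⟩
    · simp [hs, oneSubSqPow_apply]
    · simpa only [ht, re_integral_mul_conj_self] using tendsto_integral_norm_mul_oneSubSqPow_sq φ
end

section
/- Let α, β : R → [0,∞) be finitely additive set functions on a ring of sets R, with both α and β bounded. If the form b is absolutely continuous with respect to the form a (i.e., for every sequence (φ_n) of R-simple functions with a(φ_n,φ_n) → 0 and b(φ_n − φ_m, φ_n − φ_m) → 0 as n,m → ∞ one has b(φ_n,φ_n) → 0), then β is absolutely continuous with respectis to α, i.e., for every ε > 0 there exists δ > 0 such that α(E) < δ implies β(E) < ε for all E ∈ R. -/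
open Filter Topology

/-- The complex vector space of `R`-simple functions: the span of the indicator
functions `χ_E`, `E ∈ R`. -/
noncomputable def simpleSpan (T : Type*) (R : Set (Set T)) : Submodule ℂ (T → ℂ) :=
  Submodule.span ℂ {f | ∃ E ∈ R, f = E.indicator (fun _ => (1 : ℂ))}

/-- The indicator of a member of `R` belongs to the space of `R`-simple functions. -/
theorem indicator_mem_simpleSpan {T : Type*} {R : Set (Set T)} {E : Set T} (hE : E ∈ R) :
    E.indicator (fun _ => (1 : ℂ)) ∈ simpleSpan T R :=
  Submodule.subset_span ⟨E, hE, rfl⟩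

/-!
If `β` is not absolutely continuous with respect to `α`, there are `E n ∈ R` with
`α (E n) < 2⁻ⁿ` and `ε ≤ β (E n)`. The ring `R` need not contain `⋃ j ≥ n, E j`, so replace it by
a finite tail union `G n = E n ∪ ⋯ ∪ E (m - 1)` whose `β`-value is within `2⁻ⁿ` of the supremum
`L n` of `β` over all finite tail unions from `n` on. `L` decreases, hence converges, and
`β (G n ∆ G m) = 2 β (G n ∪ G m) - β (G n) - β (G m) ≤ |L n - L m| + 2⁻ⁿ + 2⁻ᵐ`, so the indicators
`χ_{G n}` are `b`-Cauchy while `a (χ_{G n}, χ_{G n}) = α (G n) ≤ 2¹⁻ⁿ → 0`. Absolute continuity of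
the forms forces `β (G n) → 0`, contradicting `ε ≤ β (E n) ≤ β (G n)`.
-/

open MeasureTheory
open scoped symmDiff

lemma MeasureTheory.IsSetRing.symmDiff_mem {T : Type*} {R : Set (Set T)} (hR : IsSetRing R)
    {E F : Set T} (hE : E ∈ R) (hF : F ∈ R) : E ∆ F ∈ R := by
  rw [Set.symmDiff_def]
  exact hR.union_mem (hR.sdiff_mem hE hF) (hR.sdiff_mem hF hE)

/-- A real-valued counterpart of `MeasureTheory.AddContent`, which takes values in `ℝ≥0∞`. -/
structure IsNonnegContent {T : Type*} (R : Set (Set T)) (γ : Set T → ℝ) : Prop where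
  nonneg : ∀ E ∈ R, 0 ≤ γ E
  union_eq : ∀ E ∈ R, ∀ F ∈ R, Disjoint E F → γ (E ∪ F) = γ E + γ F

namespace IsNonnegContent

variable {T : Type*} {R : Set (Set T)} {γ : Set T → ℝ} {E F : Set T}

lemma empty_eq (hR : IsSetRing R) (hγ : IsNonnegContent R γ) : γ ∅ = 0 := by
  have h := hγ.union_eq ∅ hR.empty_mem ∅ hR.empty_mem (Set.disjoint_empty ∅)
  rw [Set.union_empty] at h
  linarith

lemma inter_add_diff (hR : IsSetRing R) (hγ : IsNonnegContent R γ) (hE : E ∈ R) (hF : F ∈ R) :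
    γ (E ∩ F) + γ (E \ F) = γ E := by
  rw [← hγ.union_eq _ (hR.inter_mem hE hF) _ (hR.sdiff_mem hE hF) Set.disjoint_sdiff_inter.symm,
    Set.inter_union_sdiff]

lemma mono (hR : IsSetRing R) (hγ : IsNonnegContent R γ) (hE : E ∈ R) (hF : F ∈ R)
    (hEF : E ⊆ F) : γ E ≤ γ F := by
  rw [← hγ.inter_add_diff hR hF hE, Set.inter_eq_right.2 hEF]
  exact le_add_of_nonneg_right (hγ.nonneg _ (hR.sdiff_mem hF hE))

lemma union_add_inter (hR : IsSetRing R) (hγ : IsNonnegContent R γ) (hE : E ∈ R) (hF : F ∈ R) :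
    γ (E ∪ F) + γ (E ∩ F) = γ E + γ F := by
  rw [← Set.union_sdiff_self, hγ.union_eq _ hE _ (hR.sdiff_mem hF hE) Set.disjoint_sdiff_right,
    ← hγ.inter_add_diff hR hF hE, Set.inter_comm]
  ring

lemma union_le (hR : IsSetRing R) (hγ : IsNonnegContent R γ) (hE : E ∈ R) (hF : F ∈ R) :
    γ (E ∪ F) ≤ γ E + γ F := by
  have := hγ.union_add_inter hR hE hF
  have := hγ.nonneg _ (hR.inter_mem hE hF)
  linarith

lemma symmDiff_add_inter (hR : IsSetRing R) (hγ : IsNonnegContent R γ) (hE : E ∈ R)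
    (hF : F ∈ R) : γ (E ∆ F) + γ (E ∩ F) = γ (E ∪ F) := by
  rw [← hγ.union_eq _ (hR.symmDiff_mem hE hF) _ (hR.inter_mem hE hF) (disjoint_symmDiff_inf E F)]
  exact congrArg γ (symmDiff_sup_inf E F)

lemma biUnion_le_sum (hR : IsSetRing R) (hγ : IsNonnegContent R γ) {ι : Type*} (s : Finset ι)
    {f : ι → Set T} (hf : ∀ i ∈ s, f i ∈ R) : γ (⋃ i ∈ s, f i) ≤ ∑ i ∈ s, γ (f i) := by
  classical
  induction s using Finset.induction with
  | empty => simp [hγ.empty_eq hR]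
  | insert i s hi ih =>
    have hfs : ∀ j ∈ s, f j ∈ R := fun j hj => hf j (Finset.mem_insert_of_mem hj)
    rw [Finset.sum_insert hi, Finset.set_biUnion_insert]
    exact (hγ.union_le hR (hf i (Finset.mem_insert_self i s)) (hR.biUnion_mem s hfs)).trans
      (add_le_add_right (ih hfs) _)

lemma biUnion_Ico_le_two_mul_pow (hR : IsSetRing R) (hγ : IsNonnegContent R γ)
    {E : ℕ → Set T} (hE : ∀ n, E n ∈ R) (hsmall : ∀ n, γ (E n) ≤ (1 / 2) ^ n) (n m : ℕ) :
    γ (⋃ j ∈ Finset.Ico n m, E j) ≤ 2 * (1 / 2) ^ n :=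
  calc γ (⋃ j ∈ Finset.Ico n m, E j) ≤ ∑ j ∈ Finset.Ico n m, γ (E j) :=
        hγ.biUnion_le_sum hR _ fun j _ => hE j
    _ ≤ ∑ j ∈ Finset.Ico n m, (1 / 2 : ℝ) ^ j := Finset.sum_le_sum fun j _ => hsmall j
    _ = (1 / 2) ^ n * ∑ i ∈ Finset.range (m - n), (1 / 2 : ℝ) ^ i := by
        rw [Finset.sum_Ico_eq_sum_range, Finset.mul_sum]
        simp only [pow_add]
    _ ≤ (1 / 2) ^ n * 2 := by gcongr; exact sum_geometric_two_le _
    _ = 2 * (1 / 2) ^ n := mul_comm _ _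

lemma tendsto_symmDiff_of_union_le (hR : IsSetRing R) (hγ : IsNonnegContent R γ)
    {G : ℕ → Set T} (hG : ∀ n, G n ∈ R) {L δ : ℕ → ℝ} (hL : CauchySeq L)
    (hδ : Tendsto δ atTop (𝓝 0)) (hlow : ∀ n, L n - δ n ≤ γ (G n))
    (hup : ∀ n m, n ≤ m → γ (G n ∪ G m) ≤ L n) :
    Tendsto (fun p : ℕ × ℕ => γ (G p.1 ∆ G p.2)) atTop (𝓝 0) := by
  have hbound : ∀ n m, γ (G n ∆ G m) ≤ dist (L n) (L m) + (δ n + δ m) := by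
    intro n m
    wlog hnm : n ≤ m generalizing n m
    · rw [symmDiff_comm, dist_comm, add_comm (δ n)]
      exact this m n (le_of_not_ge hnm)
    have := hγ.union_add_inter hR (hG n) (hG m)
    have := hγ.symmDiff_add_inter hR (hG n) (hG m)
    have := le_abs_self (L n - L m)
    linarith [hlow n, hlow m, hup n m hnm, Real.dist_eq (L n) (L m)]
  have hfst : Tendsto (Prod.fst : ℕ × ℕ → ℕ) atTop atTop := by
    rw [← prod_atTop_atTop_eq]; exact tendsto_fst
  have hsnd : Tendsto (Prod.snd : ℕ × ℕ → ℕ) atTop atTop := by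
    rw [← prod_atTop_atTop_eq]; exact tendsto_snd
  refine squeeze_zero (fun p => ?_) (fun p => hbound p.1 p.2) ?_
  · exact hγ.nonneg _ (hR.symmDiff_mem (hG p.1) (hG p.2))
  · simpa using (cauchySeq_iff_tendsto_dist_atTop_0.1 hL).add
      ((hδ.comp hfst).add (hδ.comp hsnd))

lemma exists_tendsto_symmDiff_biUnion_Ico (hR : IsSetRing R) (hγ : IsNonnegContent R γ)
    (hbdd : ∃ M : ℝ, ∀ E ∈ R, γ E ≤ M) {E : ℕ → Set T} (hE : ∀ n, E n ∈ R) :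
    ∃ G : ℕ → Set T, (∀ n, E n ⊆ G n) ∧ (∀ n, ∃ m, G n = ⋃ j ∈ Finset.Ico n m, E j) ∧
      Tendsto (fun p : ℕ × ℕ => γ (G p.1 ∆ G p.2)) atTop (𝓝 0) := by
  obtain ⟨M, hM⟩ := hbdd
  set U : ℕ → ℕ → Set T := fun n m => ⋃ j ∈ Finset.Ico n m, E j
  have hUR : ∀ n m, U n m ∈ R := fun n m => hR.biUnion_mem _ fun j _ => hE j
  have hUmono : ∀ {n n' m m'}, n ≤ n' → m' ≤ m → U n' m' ⊆ U n m := by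
    intro n n' m m' hn hm
    exact Set.biUnion_subset_biUnion_left (Finset.coe_subset.2 (Finset.Ico_subset_Ico hn hm))
  have hUbdd : ∀ n, BddAbove (Set.range fun m => γ (U n m)) := fun n =>
    ⟨M, by rintro _ ⟨m, rfl⟩; exact hM _ (hUR n m)⟩
  set L : ℕ → ℝ := fun n => ⨆ m, γ (U n m)
  have hLanti : Antitone L := fun n n' hn =>
    ciSup_mono (hUbdd n) fun m => hγ.mono hR (hUR n' m) (hUR n m) (hUmono hn le_rfl)
  have hLnonneg : ∀ n, 0 ≤ L n := fun n => le_ciSup_of_le (hUbdd n) 0 (hγ.nonneg _ (hUR n 0))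
  have hL : CauchySeq L :=
    (tendsto_atTop_ciInf hLanti ⟨0, by rintro _ ⟨n, rfl⟩; exact hLnonneg n⟩).cauchySeq
  have happrox : ∀ n, ∃ m, n < m ∧ L n - (1 / 2) ^ n ≤ γ (U n m) := by
    intro n
    obtain ⟨m, hm⟩ :=
      exists_lt_of_lt_ciSup (sub_lt_self (L n) (by positivity : (0 : ℝ) < (1 / 2) ^ n))
    exact ⟨max m (n + 1), by omega,
      hm.le.trans (hγ.mono hR (hUR n m) (hUR n _) (hUmono le_rfl (le_max_left _ _)))⟩
  choose k hnk hk using happrox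
  refine ⟨fun n => U n (k n), fun n => ?_, fun n => ⟨k n, rfl⟩, ?_⟩
  · exact Set.subset_biUnion_of_mem (u := E) (by simpa using hnk n)
  refine hγ.tendsto_symmDiff_of_union_le hR (fun n => hUR n (k n)) hL
    (tendsto_pow_atTop_nhds_zero_of_lt_one (by norm_num) (by norm_num)) hk fun n n' hn => ?_
  refine le_ciSup_of_le (hUbdd n) (max (k n) (k n')) (hγ.mono hR (hR.union_mem (hUR _ _) (hUR _ _))
    (hUR _ _) (Set.union_subset ?_ ?_))
  · exact hUmono le_rfl (le_max_left _ _)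
  · exact hUmono hn (le_max_right _ _)

end IsNonnegContent

lemma IsNonnegHermForm.apply_sub_sub {D : Type*} [AddCommGroup D] [Module ℂ D]
    {s : D → D → ℂ} (hs : IsNonnegHermForm s) (x y : D) :
    s (x - y) (x - y) = s x x - s x y - s y x + s y y := by
  obtain ⟨hadd, hsmul, hsymm, -⟩ := hs
  have hsub_left : ∀ u v w : D, s (u - v) w = s u w - s v w := by
    intro u v w
    rw [sub_eq_add_neg, hadd, ← neg_one_smul ℂ v, hsmul]
    ring
  have hsub_right : ∀ u v w : D, s w (u - v) = s w u - s w v := by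
    intro u v w
    rw [hsymm, hsub_left, map_sub, ← hsymm, ← hsymm]
  rw [hsub_left, hsub_right, hsub_right]
  ring

section SimpleIndicator

variable {T : Type*} {R : Set (Set T)}

noncomputable def simpleIndicator {E : Set T} (hE : E ∈ R) : simpleSpan T R :=
  ⟨E.indicator fun _ => 1, indicator_mem_simpleSpan hE⟩

variable {γ : Set T → ℝ} {s : simpleSpan T R → simpleSpan T R → ℂ}

lemma apply_simpleIndicator_self
    (hsγ : ∀ (E : Set T) (hE : E ∈ R) (F : Set T) (hF : F ∈ R),
      s (simpleIndicator hE) (simpleIndicator hF) = (γ (E ∩ F) : ℂ))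
    {E : Set T} (hE : E ∈ R) : s (simpleIndicator hE) (simpleIndicator hE) = (γ E : ℂ) := by
  rw [hsγ, Set.inter_self]

lemma apply_simpleIndicator_sub (hR : IsSetRing R) (hγ : IsNonnegContent R γ)
    (hs : IsNonnegHermForm s)
    (hsγ : ∀ (E : Set T) (hE : E ∈ R) (F : Set T) (hF : F ∈ R),
      s (simpleIndicator hE) (simpleIndicator hF) = (γ (E ∩ F) : ℂ))
    {E F : Set T} (hE : E ∈ R) (hF : F ∈ R) :
    s (simpleIndicator hE - simpleIndicator hF) (simpleIndicator hE - simpleIndicator hF) =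
      (γ (E ∆ F) : ℂ) := by
  have hΔ : γ (E ∆ F) = γ E + γ F - 2 * γ (E ∩ F) := by
    linarith [hγ.union_add_inter hR hE hF, hγ.symmDiff_add_inter hR hE hF]
  rw [hs.apply_sub_sub, hsγ, hsγ, hsγ, hsγ, Set.inter_self, Set.inter_self, Set.inter_comm F,
    hΔ]
  push_cast
  ring

end SimpleIndicator

theorem set_function_abs_continuous_of_form_abs_continuous_general
    {T : Type*} (R : Set (Set T))
    (hne : R.Nonempty)
    (hunion : ∀ E ∈ R, ∀ F ∈ R, E ∪ F ∈ R)
    (hdiff : ∀ E ∈ R, ∀ F ∈ R, E \ F ∈ R)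
    (α β : Set T → ℝ)
    (hα0 : ∀ E ∈ R, 0 ≤ α E)
    (hαadd : ∀ E ∈ R, ∀ F ∈ R, Disjoint E F → α (E ∪ F) = α E + α F)
    (hβ0 : ∀ E ∈ R, 0 ≤ β E)
    (hβadd : ∀ E ∈ R, ∀ F ∈ R, Disjoint E F → β (E ∪ F) = β E + β F)
    (hβbdd : ∃ M : ℝ, ∀ E ∈ R, β E ≤ M)
    (a b : simpleSpan T R → simpleSpan T R → ℂ)
    (hbform : IsNonnegHermForm b)
    (ha : ∀ (E : Set T) (hE : E ∈ R) (F : Set T) (hF : F ∈ R),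
      a ⟨E.indicator (fun _ => (1 : ℂ)), indicator_mem_simpleSpan hE⟩
        ⟨F.indicator (fun _ => (1 : ℂ)), indicator_mem_simpleSpan hF⟩ = (α (E ∩ F) : ℂ))
    (hb : ∀ (E : Set T) (hE : E ∈ R) (F : Set T) (hF : F ∈ R),
      b ⟨E.indicator (fun _ => (1 : ℂ)), indicator_mem_simpleSpan hE⟩
        ⟨F.indicator (fun _ => (1 : ℂ)), indicator_mem_simpleSpan hF⟩ = (β (E ∩ F) : ℂ))
    (hac : FormAC b a) :
    ∀ ε : ℝ, 0 < ε → ∃ δ : ℝ, 0 < δ ∧ ∀ E ∈ R, α E < δ → β E < ε := by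
  have hR : IsSetRing R :=
    { empty_mem := by obtain ⟨E, hE⟩ := hne; simpa using hdiff E hE E hE
      union_mem := fun _ _ hE hF => hunion _ hE _ hF
      sdiff_mem := fun _ _ hE hF => hdiff _ hE _ hF }
  have hα : IsNonnegContent R α := ⟨hα0, hαadd⟩
  have hβ : IsNonnegContent R β := ⟨hβ0, hβadd⟩
  intro ε hε
  by_contra! hbad
  choose E hER hEα hEβ using fun n : ℕ => hbad ((1 / 2) ^ n) (by positivity)
  obtain ⟨G, hEG, hGU, hGβ⟩ := hβ.exists_tendsto_symmDiff_biUnion_Ico hR hβbdd hER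
  have hGR : ∀ n, G n ∈ R := fun n => by
    obtain ⟨m, hm⟩ := hGU n
    exact hm ▸ hR.biUnion_mem _ fun j _ => hER j
  have hGα : Tendsto (fun n => α (G n)) atTop (𝓝 0) := by
    refine squeeze_zero (g := fun n => 2 * (1 / 2 : ℝ) ^ n) (fun n => hα0 _ (hGR n))
      (fun n => ?_) (by simpa using (tendsto_pow_atTop_nhds_zero_of_lt_one
        (by norm_num : (0 : ℝ) ≤ 1 / 2) (by norm_num)).const_mul 2)
    obtain ⟨m, hm⟩ := hGU n
    exact hm ▸ hα.biUnion_Ico_le_two_mul_pow hR hER (fun j => (hEα j).le) n m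
  have hβG : Tendsto (fun n => β (G n)) atTop (𝓝 0) := by
    have := hac (fun n => simpleIndicator (hGR n))
      (by simpa [apply_simpleIndicator_self ha] using hGα.ofReal)
      (by simpa [apply_simpleIndicator_sub hR hβ hbform hb] using hGβ.ofReal)
    rw [← Filter.tendsto_ofReal_iff, Complex.ofReal_zero]
    simpa [apply_simpleIndicator_self hb] using this
  exact hε.not_ge <| ge_of_tendsto' hβG fun n => (hEβ n).trans (hβ.mono hR (hER n) (hGR n) (hEG n))

/-- **Lemma (converse part).** If `α` and `β` are bounded nonnegative finitely additive set
functions on a ring of sets `R` and the associated form `b` is absolutely continuous with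
respect to the associated form `a`, then `β` is absolutely continuous with respect
to `α`. -/
theorem set_function_abs_continuous_of_form_abs_continuous
    {T : Type*} (R : Set (Set T))
    (hne : R.Nonempty)
    (hunion : ∀ E ∈ R, ∀ F ∈ R, E ∪ F ∈ R)
    (hdiff : ∀ E ∈ R, ∀ F ∈ R, E \ F ∈ R)
    (α β : Set T → ℝ)
    (hα0 : ∀ E ∈ R, 0 ≤ α E)
    (hαadd : ∀ E ∈ R, ∀ F ∈ R, Disjoint E F → α (E ∪ F) = α E + α F)
    (hβ0 : ∀ E ∈ R, 0 ≤ β E)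
    (hβadd : ∀ E ∈ R, ∀ F ∈ R, Disjoint E F → β (E ∪ F) = β E + β F)
    (hαbdd : ∃ M : ℝ, ∀ E ∈ R, α E ≤ M)
    (hβbdd : ∃ M : ℝ, ∀ E ∈ R, β E ≤ M)
    (a b : simpleSpan T R → simpleSpan T R → ℂ)
    (haform : IsNonnegHermForm a) (hbform : IsNonnegHermForm b)
    (ha : ∀ (E : Set T) (hE : E ∈ R) (F : Set T) (hF : F ∈ R),
      a ⟨E.indicator (fun _ => (1 : ℂ)), indicator_mem_simpleSpan hE⟩
        ⟨F.indicator (fun _ => (1 : ℂ)), indicator_mem_simpleSpan hF⟩ = (α (E ∩ F) : ℂ))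
    (hb : ∀ (E : Set T) (hE : E ∈ R) (F : Set T) (hF : F ∈ R),
      b ⟨E.indicator (fun _ => (1 : ℂ)), indicator_mem_simpleSpan hE⟩
        ⟨F.indicator (fun _ => (1 : ℂ)), indicator_mem_simpleSpan hF⟩ = (β (E ∩ F) : ℂ))
    (hac : FormAC b a) :
    ∀ ε : ℝ, 0 < ε → ∃ δ : ℝ, 0 < δ ∧ ∀ E ∈ R, α E < δ → β E < ε :=
  set_function_abs_continuous_of_form_abs_continuous_general R hne hunion hdiff α β hα0 hαadd hβ0
    hβadd hβbdd a b hbform ha hb hac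
end

section
/- Let α : R → [0,∞) be a finitely additive set function on a ring of sets R and let β : R → ℂ be a bounded finitely additive set function that is absolutely continuous with respect to α. Then there exist, for each n ∈ ℕ, a natural number k_n, complex numbers c_{n,1},…,c_{n,k_n}, and sets E_{n,1},…,E_{n,k_n} ∈ R such that for every E ∈ R one has β(E) = lim_{n→∞} Σ_{i=1}^{k_n} c_{n,i} α(E ∩ E_{n,i}) (that is, β(E) = lim_{n→∞} ∫_E φ_n dα for the R-simple functions φ_n = Σ_i c_{n,i} χ_{E_{n,i}}). -/
/-!
Write `β = γ₁ + i γ₂`; it suffices to approximate a bounded, finitely additive, absolutely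
continuous real `γ` uniformly on `R`. Near-maximisers of `γ` and of `-γ` give `F ∈ R` with
`|γ (E \ F)|` uniformly small, so only subsets of `F` matter, and there `α ≤ α F < ∞`.
For equally spaced levels `r j`, a near-maximiser of `γ - r j • α` among subsets of `F` is an
approximate Hahn decomposition; intersecting them gives a decreasing chain `C j`, and on the
layer `C j \ C (j + 1)` the density of `γ` against `α` lies between `r j` and `r (j + 1)` up to
small errors. So the step function `∑ j, r j • 𝟙 (C j \ C (j + 1))` approximates `γ`, except
on `E \ C 0` and `E ∩ C n`, where the extreme levels force `α` and hence, by absolute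
continuity, `γ` to be small.
-/

open Filter Topology

/-- The total variation `|β|(E)` of a complex-valued set function `β` on a ring of sets `R`:
the supremum of `∑ i, |β (E i)|` over all finite families of pairwise disjoint members of `R`
contained in `E`. -/
noncomputable def totalVariation {T : Type*} (R : Set (Set T)) (β : Set T → ℂ)
    (E : Set T) : ℝ :=
  sSup {x : ℝ | ∃ (k : ℕ) (Es : Fin k → Set T),
    (∀ i, Es i ∈ R) ∧ Pairwise (Function.onFun Disjoint Es) ∧ (∀ i, Es i ⊆ E) ∧
    x = ∑ i, ‖β (Es i)‖}

open MeasureTheory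

section

variable {T : Type*} {R : Set (Set T)}

def IsAdditiveOn {M : Type*} [Add M] (R : Set (Set T)) (μ : Set T → M) : Prop :=
  ∀ E ∈ R, ∀ F ∈ R, Disjoint E F → μ (E ∪ F) = μ E + μ F

namespace IsAdditiveOn

section AddCommGroup

variable {M : Type*} [AddCommGroup M] {μ : Set T → M} {E F : Set T}

lemma map_empty (hR : IsSetRing R) (hμ : IsAdditiveOn R μ) : μ ∅ = 0 := by
  simpa using hμ ∅ hR.empty_mem ∅ hR.empty_mem (Set.disjoint_empty _)

lemma eq_sdiff_add_inter (hR : IsSetRing R) (hμ : IsAdditiveOn R μ) (hE : E ∈ R)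
    (hF : F ∈ R) : μ E = μ (E \ F) + μ (E ∩ F) := by
  rw [← hμ _ (hR.sdiff_mem hE hF) _ (hR.inter_mem hE hF) Set.disjoint_sdiff_inter,
    Set.sdiff_union_inter]

lemma map_biUnion (hR : IsSetRing R) (hμ : IsAdditiveOn R μ) {ι : Type*} {s : Finset ι}
    {Es : ι → Set T} (hEs : ∀ i ∈ s, Es i ∈ R) (hd : (s : Set ι).PairwiseDisjoint Es) :
    μ (⋃ i ∈ s, Es i) = ∑ i ∈ s, μ (Es i) :=
  addContent_biUnion_eq
    (m := hR.addContent_of_union μ (hμ.map_empty hR) fun hs ht => hμ _ hs _ ht) hR hEs hd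

lemma eq_sdiff_add_sum_add_inter (hR : IsSetRing R) (hμ : IsAdditiveOn R μ)
    {C : ℕ → Set T} (hC : ∀ j, C j ∈ R) (hanti : Antitone C) (hE : E ∈ R) (n : ℕ) :
    μ E = μ (E \ C 0) + ∑ j ∈ Finset.range n, μ (E ∩ (C j \ C (j + 1))) + μ (E ∩ C n) := by
  induction n with
  | zero => simpa using hμ.eq_sdiff_add_inter hR hE (hC 0)
  | succ n ih =>
    rw [ih, hμ.eq_sdiff_add_inter hR (hR.inter_mem hE (hC n)) (hC (n + 1)),
      Set.inter_sdiff_assoc, Set.inter_assoc, Set.inter_eq_right.mpr (hanti n.le_succ),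
      Finset.sum_range_succ]
    abel

end AddCommGroup

lemma re {β : Set T → ℂ} (hβ : IsAdditiveOn R β) : IsAdditiveOn R fun E => (β E).re :=
  fun E hE F hF hd => by simp only [hβ E hE F hF hd, Complex.add_re]

lemma im {β : Set T → ℂ} (hβ : IsAdditiveOn R β) : IsAdditiveOn R fun E => (β E).im :=
  fun E hE F hF hd => by simp only [hβ E hE F hF hd, Complex.add_im]

variable {α γ : Set T → ℝ} {E F : Set T}

lemma neg (hγ : IsAdditiveOn R γ) : IsAdditiveOn R fun E => -γ E :=
  fun E hE F hF hd => by simp only [hγ E hE F hF hd, neg_add]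

lemma sub_const_mul (hγ : IsAdditiveOn R γ) (hα : IsAdditiveOn R α) (t : ℝ) :
    IsAdditiveOn R fun E => γ E - t * α E :=
  fun E hE F hF hd => by simp only [hγ E hE F hF hd, hα E hE F hF hd]; ring

lemma mono (hR : IsSetRing R) (hα : IsAdditiveOn R α) (hα0 : ∀ E ∈ R, 0 ≤ α E)
    (hE : E ∈ R) (hF : F ∈ R) (hEF : E ⊆ F) : α E ≤ α F := by
  have := hα.eq_sdiff_add_inter hR hF hE
  rw [Set.inter_eq_right.mpr hEF] at this
  linarith [hα0 _ (hR.sdiff_mem hF hE)]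

lemma sum_abs_le_two_mul (hR : IsSetRing R) (hγ : IsAdditiveOn R γ) {M : ℝ}
    (hM : ∀ E ∈ R, |γ E| ≤ M) {ι : Type*} (s : Finset ι) {Es : ι → Set T} (hEs : ∀ i ∈ s, Es i ∈ R)
    (hd : (s : Set ι).PairwiseDisjoint Es) :
    ∑ i ∈ s, |γ (Es i)| ≤ 2 * M := by
  classical
  have hsub : ∀ t ⊆ s, |∑ i ∈ t, γ (Es i)| ≤ M := fun t ht => by
    rw [← hγ.map_biUnion hR (fun i hi => hEs i (ht hi)) (hd.subset ht)]
    exact hM _ (hR.biUnion_mem t fun i hi => hEs i (ht hi))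
  set pos := s.filter fun i => 0 ≤ γ (Es i)
  set neg := s.filter fun i => ¬0 ≤ γ (Es i)
  have hpos : ∑ i ∈ pos, |γ (Es i)| = ∑ i ∈ pos, γ (Es i) :=
    Finset.sum_congr rfl fun i hi => abs_of_nonneg (Finset.mem_filter.mp hi).2
  have hneg : ∑ i ∈ neg, |γ (Es i)| = -∑ i ∈ neg, γ (Es i) := by
    rw [← Finset.sum_neg_distrib]
    exact Finset.sum_congr rfl fun i hi =>
      abs_of_neg (not_le.mp (Finset.mem_filter.mp hi).2)
  rw [← Finset.sum_filter_add_sum_filter_not s fun i => 0 ≤ γ (Es i), hpos, hneg]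
  linarith [le_abs_self (∑ i ∈ pos, γ (Es i)), neg_le_abs (∑ i ∈ neg, γ (Es i)),
    hsub pos (Finset.filter_subset _ _), hsub neg (Finset.filter_subset _ _)]

lemma exists_approx_hahn (hR : IsSetRing R) (hγ : IsAdditiveOn R γ) {S : Set T}
    (hbdd : BddAbove (γ '' {E | E ∈ R ∧ E ⊆ S})) {σ : ℝ} (hσ : 0 < σ) :
    ∃ P ∈ R, P ⊆ S ∧ (∀ E ∈ R, E ⊆ P → -σ ≤ γ E) ∧
      (∀ E ∈ R, E ⊆ S → Disjoint E P → γ E ≤ σ) := by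
  obtain ⟨_, ⟨P, ⟨hP, hPS⟩, rfl⟩, hlt⟩ :=
    exists_lt_of_lt_csSup (s := γ '' {E | E ∈ R ∧ E ⊆ S})
      (Set.Nonempty.image γ ⟨∅, hR.empty_mem, Set.empty_subset S⟩) (sub_lt_self _ hσ)
  refine ⟨P, hP, hPS, fun E hE hEP => ?_, fun E hE hES hd => ?_⟩
  · have hle :=
      le_csSup hbdd ⟨P \ E, ⟨hR.sdiff_mem hP hE, Set.sdiff_subset.trans hPS⟩, rfl⟩
    have := hγ.eq_sdiff_add_inter hR hP hE
    rw [Set.inter_eq_right.mpr hEP] at this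
    linarith
  · have hle :=
      le_csSup hbdd ⟨E ∪ P, ⟨hR.union_mem hE hP, Set.union_subset hES hPS⟩, rfl⟩
    rw [hγ E hE P hP hd] at hle
    linarith

lemma exists_abs_sdiff_le (hR : IsSetRing R) (hγ : IsAdditiveOn R γ) {M : ℝ}
    (hM : ∀ E ∈ R, |γ E| ≤ M) {σ : ℝ} (hσ : 0 < σ) :
    ∃ F ∈ R, ∀ E ∈ R, |γ (E \ F)| ≤ σ := by
  obtain ⟨P, hP, -, -, hPup⟩ := hγ.exists_approx_hahn hR (S := Set.univ)
    ⟨M, by rintro _ ⟨E, ⟨hE, -⟩, rfl⟩; exact (le_abs_self _).trans (hM E hE)⟩ hσ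
  obtain ⟨Q, hQ, -, -, hQup⟩ := hγ.neg.exists_approx_hahn hR (S := Set.univ)
    ⟨M, by rintro _ ⟨E, ⟨hE, -⟩, rfl⟩; exact (neg_le_abs _).trans (hM E hE)⟩ hσ
  refine ⟨P ∪ Q, hR.union_mem hP hQ, fun E hE => abs_le.mpr ⟨?_, ?_⟩⟩
  · have := hQup _ (hR.sdiff_mem hE (hR.union_mem hP hQ)) (Set.subset_univ _)
      (Set.disjoint_sdiff_left.mono_right Set.subset_union_right)
    linarith
  · exact hPup _ (hR.sdiff_mem hE (hR.union_mem hP hQ)) (Set.subset_univ _)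
      (Set.disjoint_sdiff_left.mono_right Set.subset_union_left)

lemma sum_norm_le_four_mul (hR : IsSetRing R) {β : Set T → ℂ} (hβ : IsAdditiveOn R β) {M : ℝ}
    (hM : ∀ E ∈ R, ‖β E‖ ≤ M) {ι : Type*} (s : Finset ι) {Es : ι → Set T}
    (hEs : ∀ i ∈ s, Es i ∈ R) (hd : (s : Set ι).PairwiseDisjoint Es) :
    ∑ i ∈ s, ‖β (Es i)‖ ≤ 4 * M := by
  have hre := hβ.re.sum_abs_le_two_mul hR
    (fun E hE => (Complex.abs_re_le_norm _).trans (hM E hE)) s hEs hd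
  have him := hβ.im.sum_abs_le_two_mul hR
    (fun E hE => (Complex.abs_im_le_norm _).trans (hM E hE)) s hEs hd
  calc ∑ i ∈ s, ‖β (Es i)‖ ≤ ∑ i ∈ s, (|(β (Es i)).re| + |(β (Es i)).im|) :=
        Finset.sum_le_sum fun i _ => Complex.norm_le_abs_re_add_abs_im _
    _ ≤ 4 * M := by rw [Finset.sum_add_distrib]; linarith

end IsAdditiveOn

lemma norm_le_totalVariation (hR : IsSetRing R) {β : Set T → ℂ} (hβ : IsAdditiveOn R β) {M : ℝ}
    (hM : ∀ E ∈ R, ‖β E‖ ≤ M) {E : Set T} (hE : E ∈ R) : ‖β E‖ ≤ totalVariation R β E := by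
  refine le_csSup ⟨4 * M, ?_⟩ ⟨1, fun _ => E, fun _ => hE, Subsingleton.pairwise,
    fun _ => subset_rfl, by simp⟩
  rintro _ ⟨k, Es, hEs, hd, -, rfl⟩
  exact hβ.sum_norm_le_four_mul hR hM Finset.univ (fun i _ => hEs i) (hd.set_pairwise _)

/-- `C j` is the intersection of `j + 1` approximate Hahn sets, hence the error `(j + 1) * σ`. -/
structure IsApproxHahnChain (R : Set (Set T)) (γ α : Set T → ℝ) (F : Set T) (r : ℕ → ℝ)
    (σ : ℝ) (C : ℕ → Set T) : Prop where
  antitone : Antitone C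
  mem : ∀ j, C j ∈ R
  subset : ∀ j, C j ⊆ F
  le_of_subset : ∀ j, ∀ E ∈ R, E ⊆ C j → r j * α E - σ ≤ γ E
  le_of_disjoint : ∀ j, ∀ E ∈ R, E ⊆ F → Disjoint E (C j) → γ E ≤ r j * α E + (j + 1) * σ

lemma IsAdditiveOn.exists_isApproxHahnChain {α γ : Set T → ℝ} {F : Set T} {r : ℕ → ℝ}
    {σ : ℝ} (hR : IsSetRing R) (hγ : IsAdditiveOn R γ) (hα : IsAdditiveOn R α)
    (hα0 : ∀ E ∈ R, 0 ≤ α E) {M : ℝ} (hM : ∀ E ∈ R, γ E ≤ M)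
    (hF : F ∈ R) (hr : Monotone r) (hσ : 0 < σ) :
    ∃ C, IsApproxHahnChain R γ α F r σ C := by
  have hbdd (j : ℕ) : BddAbove ((fun E => γ E - r j * α E) '' {E | E ∈ R ∧ E ⊆ F}) := by
    refine ⟨M + |r j| * α F, ?_⟩
    rintro _ ⟨E, ⟨hE, hEF⟩, rfl⟩
    have hαE : |r j * α E| ≤ |r j| * α F := by
      rw [abs_mul, abs_of_nonneg (hα0 E hE)]
      exact mul_le_mul_of_nonneg_left (hα.mono hR hα0 hE hF hEF) (abs_nonneg _)
    linarith [hM E hE, neg_le_abs (r j * α E)]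
  choose P hP hPF hPlow hPup using fun j =>
    (hγ.sub_const_mul hα (r j)).exists_approx_hahn hR (hbdd j) hσ
  refine ⟨fun j => ⋂ i ≤ j, P i,
    fun i j hij => Set.biInter_subset_biInter_left fun _ h => le_trans h hij,
    hR.iInter_le_mem hP, fun j _ hx => hPF j (Set.mem_iInter₂.mp hx j le_rfl),
    fun j E hE hEC => ?_, fun j => ?_⟩
  · linarith [hPlow j E hE fun _ hx => Set.mem_iInter₂.mp (hEC hx) j le_rfl]
  induction j with
  | zero =>
    intro E hE hEF hd
    simp only [nonpos_iff_eq_zero, Set.iInter_iInter_eq_left] at hd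
    push_cast
    linarith [hPup 0 E hE hEF hd]
  | succ j ih =>
    intro E hE hEF hd
    rw [Set.biInter_le_succ] at hd
    have hCj := hR.iInter_le_mem hP j
    have hin := hPup (j + 1) _ (hR.inter_mem hE hCj) (Set.inter_subset_left.trans hEF)
      (Set.disjoint_left.mpr fun x hx hxP => Set.disjoint_left.mp hd hx.1 ⟨hx.2, hxP⟩)
    have hout :=
      ih _ (hR.sdiff_mem hE hCj) (Set.sdiff_subset.trans hEF) Set.disjoint_sdiff_left
    have hmono := mul_le_mul_of_nonneg_right (hr j.le_succ) (hα0 _ (hR.sdiff_mem hE hCj))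
    rw [hγ.eq_sdiff_add_inter hR hE hCj, hα.eq_sdiff_add_inter hR hE hCj]
    push_cast
    linarith

namespace IsApproxHahnChain

variable {α γ : Set T → ℝ} {F : Set T} {r : ℕ → ℝ} {σ : ℝ} {C : ℕ → Set T}

lemma abs_sub_sum_le (hC : IsApproxHahnChain R γ α F r σ C) (hR : IsSetRing R)
    (hγ : IsAdditiveOn R γ) (hα : IsAdditiveOn R α) (hα0 : ∀ E ∈ R, 0 ≤ α E) {h : ℝ}
    (hh : 0 ≤ h) (hr : ∀ j, r (j + 1) = r j + h) (hσ : 0 ≤ σ) (n : ℕ) {E : Set T}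
    (hE : E ∈ R) :
    |γ E - ∑ j ∈ Finset.range n, r j * α (E ∩ (C j \ C (j + 1)))| ≤
      |γ (E \ C 0)| + |γ (E ∩ C n)| + h * α E + n * (n + 1) * σ := by
  set D := fun j => E ∩ (C j \ C (j + 1))
  have hD (j : ℕ) : D j ∈ R := hR.inter_mem hE (hR.sdiff_mem (hC.mem j) (hC.mem (j + 1)))
  have hlayer : ∀ j ∈ Finset.range n,
      |γ (D j) - r j * α (D j)| ≤ h * α (D j) + (n + 1) * σ := by
    intro j hj
    have hjn : (j : ℝ) + 1 + 1 ≤ n + 1 := by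
      have := Finset.mem_range.mp hj
      norm_cast
      omega
    have hlow := hC.le_of_subset j (D j) (hD j) fun _ hx => hx.2.1
    have hup := hC.le_of_disjoint (j + 1) (D j) (hD j) (fun _ hx => hC.subset j hx.2.1)
      (Set.disjoint_left.mpr fun _ hx => hx.2.2)
    rw [hr] at hup
    push_cast at hup
    have := mul_nonneg hh (hα0 _ (hD j))
    have := mul_le_mul_of_nonneg_right hjn hσ
    rw [abs_le]
    constructor <;> nlinarith
  have hαsum : ∑ j ∈ Finset.range n, α (D j) ≤ α E := by
    linarith [hα.eq_sdiff_add_sum_add_inter hR hC.mem hC.antitone hE n,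
      hα0 _ (hR.sdiff_mem hE (hC.mem 0)), hα0 _ (hR.inter_mem hE (hC.mem n))]
  have hsum :
      ∑ j ∈ Finset.range n, |γ (D j) - r j * α (D j)| ≤ h * α E + n * (n + 1) * σ :=
    calc ∑ j ∈ Finset.range n, |γ (D j) - r j * α (D j)|
        ≤ ∑ j ∈ Finset.range n, (h * α (D j) + (n + 1) * σ) := Finset.sum_le_sum hlayer
      _ = h * ∑ j ∈ Finset.range n, α (D j) + n * (n + 1) * σ := by
        rw [Finset.sum_add_distrib, Finset.mul_sum, Finset.sum_const, Finset.card_range,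
          nsmul_eq_mul]
        ring
      _ ≤ h * α E + n * (n + 1) * σ := by gcongr
  have hsplit : γ E - ∑ j ∈ Finset.range n, r j * α (D j) =
      γ (E \ C 0) + γ (E ∩ C n) + ∑ j ∈ Finset.range n, (γ (D j) - r j * α (D j)) := by
    rw [Finset.sum_sub_distrib, hγ.eq_sdiff_add_sum_add_inter hR hC.mem hC.antitone hE n]
    ring
  rw [hsplit]
  have := Finset.abs_sum_le_sum_abs (fun j => γ (D j) - r j * α (D j)) (Finset.range n)
  have := abs_add_three (γ (E \ C 0)) (γ (E ∩ C n))
    (∑ j ∈ Finset.range n, (γ (D j) - r j * α (D j)))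
  linarith

lemma neg_mul_sdiff_le (hC : IsApproxHahnChain R γ α F r σ C) (hR : IsSetRing R) {M : ℝ}
    (hM : ∀ E ∈ R, -M ≤ γ E) {E : Set T} (hE : E ∈ R) (hEF : E ⊆ F) :
    -r 0 * α (E \ C 0) ≤ M + σ := by
  have hS := hR.sdiff_mem hE (hC.mem 0)
  have := hC.le_of_disjoint 0 _ hS (Set.sdiff_subset.trans hEF) Set.disjoint_sdiff_left
  push_cast at this
  linarith [hM _ hS]

lemma mul_inter_le (hC : IsApproxHahnChain R γ α F r σ C) (hR : IsSetRing R) {M : ℝ}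
    (hM : ∀ E ∈ R, γ E ≤ M) {E : Set T} (hE : E ∈ R) (n : ℕ) :
    r n * α (E ∩ C n) ≤ M + σ := by
  have hS := hR.inter_mem hE (hC.mem n)
  linarith [hC.le_of_subset n _ hS Set.inter_subset_right, hM _ hS]

end IsApproxHahnChain

namespace IsAdditiveOn

variable {α γ : Set T → ℝ} {M : ℝ}

lemma exists_simple_approx_on (hR : IsSetRing R) (hγ : IsAdditiveOn R γ) (hα : IsAdditiveOn R α)
    (hα0 : ∀ E ∈ R, 0 ≤ α E) (hM : ∀ E ∈ R, |γ E| ≤ M)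
    (hac : ∀ ε > 0, ∃ δ > 0, ∀ E ∈ R, α E < δ → |γ E| < ε) {F : Set T} (hF : F ∈ R)
    {ε : ℝ} (hε : 0 < ε) :
    ∃ (k : ℕ) (c : Fin k → ℝ) (Es : Fin k → Set T), (∀ i, Es i ∈ R ∧ Es i ⊆ F) ∧
      ∀ E ∈ R, E ⊆ F → |γ E - ∑ i, c i * α (E ∩ Es i)| ≤ ε := by
  obtain ⟨δ, hδ, hδγ⟩ := hac (ε / 4) (by positivity)
  have hαF := hα0 F hF
  set h := ε / (4 * (α F + 1))
  have hh : 0 < h := by positivity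
  obtain ⟨N, hN⟩ := exists_nat_gt ((M + 1) / (h * δ))
  have hNhδ : M + 1 < N * h * δ := by rw [mul_assoc, ← div_lt_iff₀ (by positivity)]; exact hN
  have hNh : 0 ≤ N * h := by positivity
  obtain ⟨σ₀, hσ₀, hσ₀ε⟩ := exists_pos_mul_lt (show 0 < ε / 4 by positivity)
    ((2 * N : ℕ) * ((2 * N : ℕ) + 1))
  set σ := min σ₀ 1
  have hσ : 0 < σ := lt_min hσ₀ one_pos
  -- `N h δ > M + 1` forces `α < δ` outside the levels `-N h ≤ r j ≤ N h`, `j ≤ 2 N`.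
  set r : ℕ → ℝ := fun j => (j - N) * h
  have hr : Monotone r := fun i j hij => by simp only [r]; gcongr
  obtain ⟨C, hC⟩ := hγ.exists_isApproxHahnChain hR hα hα0
    (fun E hE => (le_abs_self _).trans (hM E hE)) hF hr hσ
  refine ⟨2 * N, fun i => r i, fun i => C i \ C (i + 1),
    fun i => ⟨hR.sdiff_mem (hC.mem i) (hC.mem (i + 1)), Set.sdiff_subset.trans (hC.subset i)⟩,
    fun E hE hEF => ?_⟩
  rw [Fin.sum_univ_eq_sum_range (fun j => r j * α (E ∩ (C j \ C (j + 1)))) (2 * N)]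
  have hbound := hC.abs_sub_sum_le hR hγ hα hα0 hh.le
    (fun j => by simp only [r]; push_cast; ring) hσ.le (2 * N) hE
  have hbot : |γ (E \ C 0)| < ε / 4 := by
    refine hδγ _ (hR.sdiff_mem hE (hC.mem 0)) (lt_of_mul_lt_mul_left ?_ hNh)
    have := hC.neg_mul_sdiff_le hR (fun E hE => neg_le_of_abs_le (hM E hE)) hE hEF
    simp only [r, CharP.cast_eq_zero] at this
    linarith [min_le_right σ₀ 1]
  have htop : |γ (E ∩ C (2 * N))| < ε / 4 := by
    refine hδγ _ (hR.inter_mem hE (hC.mem (2 * N))) (lt_of_mul_lt_mul_left ?_ hNh)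
    have := hC.mul_inter_le hR (fun E hE => le_of_abs_le (hM E hE)) hE (2 * N)
    simp only [r] at this
    push_cast at this
    linarith [min_le_right σ₀ 1]
  have hαE : h * α E ≤ ε / 4 :=
    calc h * α E ≤ h * α F := by gcongr; exact hα.mono hR hα0 hE hF hEF
      _ ≤ ε / 4 := by
        rw [div_mul_eq_mul_div, div_le_div_iff₀ (by positivity) (by norm_num)]
        nlinarith
  have hσε : ((2 * N : ℕ) : ℝ) * ((2 * N : ℕ) + 1) * σ ≤ ε / 4 :=
    (mul_le_mul_of_nonneg_left (min_le_left σ₀ 1) (by positivity)).trans hσ₀ε.le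
  linarith

lemma exists_simple_approx (hR : IsSetRing R) (hγ : IsAdditiveOn R γ) (hα : IsAdditiveOn R α)
    (hα0 : ∀ E ∈ R, 0 ≤ α E) (hM : ∀ E ∈ R, |γ E| ≤ M)
    (hac : ∀ ε > 0, ∃ δ > 0, ∀ E ∈ R, α E < δ → |γ E| < ε) {ε : ℝ} (hε : 0 < ε) :
    ∃ (k : ℕ) (c : Fin k → ℝ) (Es : Fin k → Set T), (∀ i, Es i ∈ R) ∧
      ∀ E ∈ R, |γ E - ∑ i, c i * α (E ∩ Es i)| ≤ ε := by
  obtain ⟨F, hF, hFγ⟩ := hγ.exists_abs_sdiff_le hR hM (half_pos hε)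
  obtain ⟨k, c, Es, hEs, happrox⟩ := hγ.exists_simple_approx_on hR hα hα0 hM hac hF (half_pos hε)
  refine ⟨k, c, Es, fun i => (hEs i).1, fun E hE => ?_⟩
  have hsum : ∑ i, c i * α (E ∩ Es i) = ∑ i, c i * α (E ∩ F ∩ Es i) := by
    simp only [Set.inter_assoc, fun i => Set.inter_eq_right.mpr (hEs i).2]
  have := happrox (E ∩ F) (hR.inter_mem hE hF) Set.inter_subset_right
  have := abs_add_le (γ (E \ F)) (γ (E ∩ F) - ∑ i, c i * α (E ∩ F ∩ Es i))
  rw [hγ.eq_sdiff_add_inter hR hE hF, hsum, add_sub_assoc]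
  linarith [hFγ E hE]

end IsAdditiveOn

lemma IsAdditiveOn.exists_simple_approx_complex (hR : IsSetRing R) {α : Set T → ℝ} {β : Set T → ℂ}
    (hα : IsAdditiveOn R α) (hα0 : ∀ E ∈ R, 0 ≤ α E) (hβ : IsAdditiveOn R β) {M : ℝ}
    (hM : ∀ E ∈ R, ‖β E‖ ≤ M) (hac : ∀ ε > 0, ∃ δ > 0, ∀ E ∈ R, α E < δ → ‖β E‖ < ε)
    {ε : ℝ} (hε : 0 < ε) :
    ∃ (k : ℕ) (c : Fin k → ℂ) (Es : Fin k → Set T), (∀ i, Es i ∈ R) ∧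
      ∀ E ∈ R, ‖β E - ∑ i, c i * (α (E ∩ Es i) : ℂ)‖ ≤ ε := by
  obtain ⟨k₁, c₁, A₁, hA₁, h₁⟩ := hβ.re.exists_simple_approx hR hα hα0
    (fun E hE => (Complex.abs_re_le_norm _).trans (hM E hE))
    (fun ε hε => (hac ε hε).imp fun _ ⟨hδ, h⟩ =>
      ⟨hδ, fun E hE hαE => (Complex.abs_re_le_norm _).trans_lt (h E hE hαE)⟩) (half_pos hε)
  obtain ⟨k₂, c₂, A₂, hA₂, h₂⟩ := hβ.im.exists_simple_approx hR hα hα0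
    (fun E hE => (Complex.abs_im_le_norm _).trans (hM E hE))
    (fun ε hε => (hac ε hε).imp fun _ ⟨hδ, h⟩ =>
      ⟨hδ, fun E hE hαE => (Complex.abs_im_le_norm _).trans_lt (h E hE hαE)⟩) (half_pos hε)
  refine ⟨k₁ + k₂, Fin.append (fun i => (c₁ i : ℂ)) (fun i => c₂ i * Complex.I),
    Fin.append A₁ A₂, Fin.addCases (by simpa using hA₁) (by simpa using hA₂), fun E hE => ?_⟩
  rw [Fin.sum_univ_add]
  simp only [Fin.append_left, Fin.append_right]
  calc _ ≤ |(β E).re - ∑ i, c₁ i * α (E ∩ A₁ i)| +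
        |(β E).im - ∑ i, c₂ i * α (E ∩ A₂ i)| := by
        refine (Complex.norm_le_abs_re_add_abs_im _).trans_eq ?_
        simp [Complex.re_sum, Complex.im_sum]
    _ ≤ ε := by linarith [h₁ E hE, h₂ E hE]

end

/-- **Theorem (Radon–Nikodym–Darst, pointwise part).** Let `α` be a nonnegative finitely
additive set function and `β` a bounded complex-valued finitely additive set function on a
ring of sets `R`, with `β` absolutely continuous with respect to `α`. Then there is a
sequence of `R`-simple functions `φ_n = ∑ i, c n i • χ_{Es n i}` such that
`β E = lim_n ∫_E φ_n dα = lim_n ∑ i, c n i * α (E ∩ Es n i)` for every `E ∈ R`. -/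
theorem radon_nikodym_darst_pointwise
    {T : Type*} (R : Set (Set T))
    (hne : R.Nonempty)
    (hunion : ∀ E ∈ R, ∀ F ∈ R, E ∪ F ∈ R)
    (hdiff : ∀ E ∈ R, ∀ F ∈ R, E \ F ∈ R)
    (α : Set T → ℝ) (β : Set T → ℂ)
    (hα0 : ∀ E ∈ R, 0 ≤ α E)
    (hαadd : ∀ E ∈ R, ∀ F ∈ R, Disjoint E F → α (E ∪ F) = α E + α F)
    (hβadd : ∀ E ∈ R, ∀ F ∈ R, Disjoint E F → β (E ∪ F) = β E + β F)
    (hβbdd : ∃ M : ℝ, ∀ E ∈ R, ‖β E‖ ≤ M)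
    (hac : ∀ ε : ℝ, 0 < ε → ∃ δ : ℝ, 0 < δ ∧
      ∀ E ∈ R, α E < δ → totalVariation R β E < ε) :
    ∃ (k : ℕ → ℕ) (c : (n : ℕ) → Fin (k n) → ℂ) (Es : (n : ℕ) → Fin (k n) → Set T),
      (∀ (n : ℕ) (i : Fin (k n)), Es n i ∈ R) ∧
      ∀ E ∈ R, Tendsto (fun n => ∑ i, c n i * (α (E ∩ Es n i) : ℂ)) atTop (𝓝 (β E)) := by
  obtain ⟨M, hM⟩ := hβbdd
  have hR : IsSetRing R :=
    { empty_mem := by obtain ⟨E, hE⟩ := hne; simpa using hdiff E hE E hE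
      union_mem := fun E F hE hF => hunion E hE F hF
      sdiff_mem := fun E F hE hF => hdiff E hE F hF }
  have hacβ : ∀ ε > 0, ∃ δ > 0, ∀ E ∈ R, α E < δ → ‖β E‖ < ε := fun ε hε =>
    (hac ε hε).imp fun _ ⟨hδ, h⟩ =>
      ⟨hδ, fun E hE hαE => (norm_le_totalVariation hR hβadd hM hE).trans_lt (h E hE hαE)⟩
  choose k c Es hEs happrox using fun n : ℕ =>
    IsAdditiveOn.exists_simple_approx_complex hR hαadd hα0 hβadd hM hacβ
      (Nat.one_div_pos_of_nat (n := n))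
  refine ⟨k, c, Es, hEs, fun E hE => tendsto_iff_norm_sub_tendsto_zero.mpr ?_⟩
  refine squeeze_zero (fun _ => norm_nonneg _) (fun n => ?_)
    tendsto_one_div_add_atTop_nhds_zero_nat
  rw [norm_sub_rev]
  exact happrox n E hE
end

section
/- Let μ, ν be finite measures on a measurable space (T,Σ) with ν absolutely continuous with respect to μ. If f ∈ dom J*, then |f| ∈ dom J*: there exists h ∈ L²(μ) such that ∫ φ·conj(h) dμ = ∫ φ·|f| dν for all simple functions φ. -/
/-!
Testing the defining identity of `g = J* f` against indicators of measurable sets shows that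
`conj g` and `conj f` have the same set integrals against `μ` and `ν` respectively, so
`conj g = (dν/dμ) • conj f` `μ`-a.e.  Since the density is nonnegative, taking norms gives
`‖g‖ = (dν/dμ) ‖f‖` `μ`-a.e., and then `‖g‖ ∈ L²(μ)` witnesses `|f| ∈ dom J*`.
-/

open MeasureTheory

section

variable {T : Type*} [MeasurableSpace T] {μ ν : Measure T}

theorem setIntegral_eq_of_forall_simpleFunc {𝕜 : Type*} [RCLike 𝕜] {G F : T → 𝕜}
    (h : ∀ φ : SimpleFunc T 𝕜, ∫ x, φ x * G x ∂μ = ∫ x, φ x * F x ∂ν)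
    {s : Set T} (hs : MeasurableSet s) :
    ∫ x in s, G x ∂μ = ∫ x in s, F x ∂ν := by
  have integral_indicator_mul (m : Measure T) (w : T → 𝕜) :
      ∫ x, (SimpleFunc.const T (1 : 𝕜)).restrict s x * w x ∂m = ∫ x in s, w x ∂m := by
    rw [← integral_indicator hs, SimpleFunc.coe_restrict _ hs]
    congr 1 with x
    by_cases hx : x ∈ s <;> simp [hx]
  simpa only [integral_indicator_mul] using h ((SimpleFunc.const T 1).restrict s)

variable {E : Type*} [NormedAddCommGroup E] [NormedSpace ℝ E]

theorem norm_ae_eq_rnDeriv_mul_norm {G F : T → E}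
    (h : G =ᵐ[μ] fun x => (ν.rnDeriv μ x).toReal • F x) :
    (fun x => ‖G x‖) =ᵐ[μ] fun x => (ν.rnDeriv μ x).toReal * ‖F x‖ := by
  filter_upwards [h] with x hx
  rw [hx, norm_smul, Real.norm_of_nonneg ENNReal.toReal_nonneg]

variable [ν.HaveLebesgueDecomposition μ] [SigmaFinite ν] [CompleteSpace E] in
theorem ae_eq_rnDeriv_smul_of_forall_setIntegral_eq (hac : ν ≪ μ) {G F : T → E}
    (hG : Integrable G μ) (hF : Integrable F ν)
    (h : ∀ s, MeasurableSet s → ∫ x in s, G x ∂μ = ∫ x in s, F x ∂ν) :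
    G =ᵐ[μ] fun x => (ν.rnDeriv μ x).toReal • F x :=
  hG.ae_eq_of_forall_setIntegral_eq _ _ ((integrable_rnDeriv_smul_iff hac).mpr hF)
    fun s hs _ => by rw [h s hs, setIntegral_rnDeriv_smul hac hs]

end

/-- **Lemma.** Let `μ, ν` be finite measures with `ν ≪ μ`, and let `J` be the embedding of
the simple functions in `L²(μ)` into `L²(ν)`.  If `f ∈ dom J*` (witnessed by `g = J* f`),
then `|f| ∈ dom J*`. -/
theorem abs_mem_dom_adjoint
    {T : Type*} [MeasurableSpace T] (μ ν : Measure T)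
    [IsFiniteMeasure μ] [IsFiniteMeasure ν] (hac : ν ≪ μ)
    (f : T → ℂ) (hf : MemLp f 2 ν)
    (hdom : ∃ g : T → ℂ, MemLp g 2 μ ∧
      ∀ φ : SimpleFunc T ℂ,
        ∫ x, φ x * (starRingEnd ℂ) (g x) ∂μ = ∫ x, φ x * (starRingEnd ℂ) (f x) ∂ν) :
    ∃ h : T → ℂ, MemLp h 2 μ ∧
      ∀ φ : SimpleFunc T ℂ,
        ∫ x, φ x * (starRingEnd ℂ) (h x) ∂μ = ∫ x, φ x * (‖f x‖ : ℂ) ∂ν := by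
  obtain ⟨g, hg, hgf⟩ := hdom
  have hconj : (fun x => (starRingEnd ℂ) (g x)) =ᵐ[μ]
      fun x => (ν.rnDeriv μ x).toReal • (starRingEnd ℂ) (f x) :=
    ae_eq_rnDeriv_smul_of_forall_setIntegral_eq hac
      (hg.star.integrable one_le_two) (hf.star.integrable one_le_two)
      fun s hs => setIntegral_eq_of_forall_simpleFunc hgf hs
  have hnorm := norm_ae_eq_rnDeriv_mul_norm hconj
  simp only [RCLike.norm_conj] at hnorm
  refine ⟨fun x => (‖g x‖ : ℂ), hg.norm.ofReal, fun φ => ?_⟩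
  calc ∫ x, φ x * (starRingEnd ℂ) (‖g x‖ : ℂ) ∂μ
      = ∫ x, (ν.rnDeriv μ x).toReal • (φ x * (‖f x‖ : ℂ)) ∂μ := by
        refine integral_congr_ae ?_
        filter_upwards [hnorm] with x hx
        rw [Complex.conj_ofReal, hx, Complex.real_smul]
        push_cast
        ring
    _ = ∫ x, φ x * (‖f x‖ : ℂ) ∂ν := integral_rnDeriv_smul hac
end

section
/- Let μ, ν be finite measures on a measurable space (T,Σ) with ν absolutely continuous with respect to μ. The operator J* is positive in the following sense: if f ∈ dom J* and f ≥ 0 ν-almost everywhere, then J*f ≥ 0 μ-almost everywhere; that is, if f ∈ L²(ν), f ≥ 0 ν-a.e., and g ∈ L²(μ) satisfies ∫ φ·conj(g) dμ = ∫ φ·conj(f) dν for all simple φ, then g ≥ 0 μ-a.e. -/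
open MeasureTheory
open scoped ComplexOrder

/-!
Testing the adjoint relation against the indicator of a measurable set `E` gives
`∫_E g dμ = ∫_E f dν`, which is `≥ 0` because `f ≥ 0`. A function all of whose set integrals are
`≥ 0` for the order `0 ≤ z ↔ 0 ≤ re z ∧ im z = 0` has a.e. vanishing imaginary part and a.e.
nonnegative real part, i.e. it is `≥ 0` a.e.
-/

open ComplexConjugate

section

variable {T 𝕜 : Type*} [MeasurableSpace T] [RCLike 𝕜] {μ ν : Measure T}

namespace RCLike

theorem integral_nonneg_of_ae {f : T → 𝕜} (hf : ∀ᵐ x ∂μ, 0 ≤ f x) : 0 ≤ ∫ x, f x ∂μ := by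
  have hf_real : f =ᵐ[μ] fun x ↦ ((re (f x) : ℝ) : 𝕜) := by
    filter_upwards [hf] with x hx
    exact (conj_eq_iff_re.mp (conj_eq_iff_im.mpr (nonneg_iff.mp hx).2)).symm
  rw [integral_congr_ae hf_real, integral_ofReal, ofReal_nonneg]
  exact MeasureTheory.integral_nonneg_of_ae (hf.mono fun x hx ↦ (nonneg_iff.mp hx).1)

theorem ae_nonneg_of_forall_setIntegral_nonneg {g : T → 𝕜} (hg : Integrable g μ)
    (h : ∀ s, MeasurableSet s → μ s < ⊤ → 0 ≤ ∫ x in s, g x ∂μ) : ∀ᵐ x ∂μ, 0 ≤ g x := by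
  have h_re : 0 ≤ᵐ[μ] fun x ↦ re (g x) :=
    MeasureTheory.ae_nonneg_of_forall_setIntegral_nonneg hg.re fun s hs hμs ↦ by
      rw [integral_re hg.restrict]
      exact (nonneg_iff.mp (h s hs hμs)).1
  have h_im : (fun x ↦ im (g x)) =ᵐ[μ] 0 :=
    hg.im.ae_eq_zero_of_forall_setIntegral_eq_zero fun s hs hμs ↦ by
      rw [integral_im hg.restrict]
      exact (nonneg_iff.mp (h s hs hμs)).2
  filter_upwards [h_re, h_im] with x hx_re hx_im
  exact nonneg_iff.mpr ⟨hx_re, hx_im⟩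

end RCLike

theorem SimpleFunc.integral_restrict_const_one_mul {s : Set T} (hs : MeasurableSet s)
    (h : T → 𝕜) :
    ∫ x, ((SimpleFunc.const T (1 : 𝕜)).restrict s) x * h x ∂μ = ∫ x in s, h x ∂μ := by
  rw [← integral_indicator hs]
  congr 1 with x
  by_cases hx : x ∈ s <;> simp [SimpleFunc.restrict_apply _ hs, hx]

theorem setIntegral_eq_of_integral_simpleFunc_mul_conj_eq {f g : T → 𝕜}
    (hadj : ∀ φ : SimpleFunc T 𝕜, ∫ x, φ x * conj (g x) ∂μ = ∫ x, φ x * conj (f x) ∂ν)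
    {s : Set T} (hs : MeasurableSet s) :
    ∫ x in s, g x ∂μ = ∫ x in s, f x ∂ν := by
  have h := hadj ((SimpleFunc.const T 1).restrict s)
  rw [SimpleFunc.integral_restrict_const_one_mul hs, SimpleFunc.integral_restrict_const_one_mul hs,
    integral_conj, integral_conj] at h
  exact (starRingEnd 𝕜).injective h

end

theorem adjoint_positive_general
    {T : Type*} [MeasurableSpace T] (μ ν : Measure T)
    [IsFiniteMeasure μ]
    (f : T → ℂ) (hfpos : ∀ᵐ x ∂ν, 0 ≤ f x)
    (g : T → ℂ) (hg : MemLp g 2 μ)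
    (hadj : ∀ φ : SimpleFunc T ℂ,
      ∫ x, φ x * (starRingEnd ℂ) (g x) ∂μ = ∫ x, φ x * (starRingEnd ℂ) (f x) ∂ν) :
    ∀ᵐ x ∂μ, 0 ≤ g x :=
  RCLike.ae_nonneg_of_forall_setIntegral_nonneg (hg.integrable (by norm_num)) fun s hs _ ↦ by
    rw [setIntegral_eq_of_integral_simpleFunc_mul_conj_eq hadj hs]
    exact RCLike.integral_nonneg_of_ae (ae_restrict_of_ae hfpos)

/-- **Lemma.** Let `μ, ν` be finite measures with `ν ≪ μ`, and let `J` be the embedding of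
the simple functions in `L²(μ)` into `L²(ν)`.  The adjoint `J*` is a positive operator:
if `f ∈ dom J*` with `f ≥ 0` ν-a.e. and `g = J* f`, then `g ≥ 0` μ-a.e. -/
theorem adjoint_positive
    {T : Type*} [MeasurableSpace T] (μ ν : Measure T)
    [IsFiniteMeasure μ] [IsFiniteMeasure ν] (hac : ν ≪ μ)
    (f : T → ℂ) (hf : MemLp f 2 ν) (hfpos : ∀ᵐ x ∂ν, 0 ≤ f x)
    (g : T → ℂ) (hg : MemLp g 2 μ)
    (hadj : ∀ φ : SimpleFunc T ℂ,
      ∫ x, φ x * (starRingEnd ℂ) (g x) ∂μ = ∫ x, φ x * (starRingEnd ℂ) (f x) ∂ν) :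
    ∀ᵐ x ∂μ, 0 ≤ g x :=
  adjoint_positive_general μ ν f hfpos g hg hadj
end

section
/- Let μ, ν be finite measures on a measurable space (T,Σ) with ν absolutely continuous with respect to μ. If f, g ∈ L²(ν) satisfy f ≥ 0 and g ≥ 0 ν-almost everywhere and f ∈ dom J*, then the pointwise minimum f ∧ g belongs to dom J*: there exists h ∈ L²(μ) such that ∫ φ·conj(h) dμ = ∫ φ·(f ∧ g) dν for all simple functions φ. -/
open MeasureTheory
open scoped ComplexOrder

/-!
Write `ρ = dν/dμ`. Testing the adjoint identity of `f` against indicators of measurable sets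
identifies its representative `g₀` as `conj g₀ = ρ • conj f` `μ`-a.e.; in particular `ρ f ∈ L²(μ)`.
Since `g ≥ 0`, `|min (Re f) (Re g)| ≤ |f|`, so `ρ • min (Re f) (Re g)` is dominated by `|g₀|`, and
it represents `f ∧ g` because `∫ φ · ρ u dμ = ∫ φ · u dν`.
-/

namespace MeasureTheory

variable {T : Type*} [MeasurableSpace T] {μ ν : Measure T}

theorem ae_norm_rnDeriv_smul_le [SigmaFinite μ] [SigmaFinite ν]
    {E F : Type*} [NormedAddCommGroup E] [NormedSpace ℝ E] [NormedAddCommGroup F] [NormedSpace ℝ F]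
    {u : T → E} {v : T → F} (h : ∀ᵐ x ∂ν, ‖u x‖ ≤ ‖v x‖) :
    ∀ᵐ x ∂μ, ‖(ν.rnDeriv μ x).toReal • u x‖ ≤ ‖(ν.rnDeriv μ x).toReal • v x‖ := by
  filter_upwards [Measure.ae_rnDeriv_ne_zero_imp_of_ae μ h] with x hx
  by_cases h0 : ν.rnDeriv μ x = 0
  · simp [h0]
  · rw [norm_smul, norm_smul]
    exact mul_le_mul_of_nonneg_left (hx h0) (norm_nonneg _)

variable {𝕜 : Type*} [RCLike 𝕜]

theorem SimpleFunc.integral_restrict_const_one_mul {s : Set T} (hs : MeasurableSet s)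
    (u : T → 𝕜) :
    ∫ x, (SimpleFunc.const T (1 : 𝕜)).restrict s x * u x ∂μ = ∫ x in s, u x ∂μ := by
  simp_rw [SimpleFunc.restrict_apply _ hs, ← Set.indicator_mul_left, SimpleFunc.coe_const,
    Function.const_apply, one_mul]
  exact integral_indicator hs

theorem ae_eq_rnDeriv_smul_of_integral_simpleFunc_mul_eq [SigmaFinite μ] [SigmaFinite ν]
    (hac : ν ≪ μ) {F G : T → 𝕜} (hF : Integrable F ν) (hG : Integrable G μ)
    (h : ∀ φ : SimpleFunc T 𝕜, ∫ x, φ x * G x ∂μ = ∫ x, φ x * F x ∂ν) :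
    G =ᵐ[μ] fun x => (ν.rnDeriv μ x).toReal • F x := by
  have hρF : Integrable (fun x => (ν.rnDeriv μ x).toReal • F x) μ :=
    (integrable_rnDeriv_smul_iff hac).2 hF
  refine ae_eq_of_forall_setIntegral_eq_of_sigmaFinite (fun s _ _ => hG.integrableOn)
    (fun s _ _ => hρF.integrableOn) fun s hs _ => ?_
  have hs' := h ((SimpleFunc.const T (1 : 𝕜)).restrict s)
  rw [SimpleFunc.integral_restrict_const_one_mul hs, SimpleFunc.integral_restrict_const_one_mul hs]
    at hs'
  rw [hs', setIntegral_rnDeriv_smul hac hs]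

end MeasureTheory

theorem Complex.norm_ofReal_min_re_le {z w : ℂ} (hw : 0 ≤ w) :
    ‖((min z.re w.re : ℝ) : ℂ)‖ ≤ ‖z‖ := by
  have hw' : 0 ≤ w.re := (Complex.nonneg_iff.1 hw).1
  rw [Complex.norm_real, Real.norm_eq_abs]
  refine (abs_le.2 ⟨?_, ?_⟩).trans (Complex.abs_re_le_norm z)
  · exact le_min (neg_abs_le _) (by linarith [abs_nonneg z.re])
  · exact (min_le_left _ _).trans (le_abs_self _)

theorem min_mem_dom_adjoint_general
    {T : Type*} [MeasurableSpace T] (μ ν : Measure T)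
    [IsFiniteMeasure μ] [IsFiniteMeasure ν] (hac : ν ≪ μ)
    (f g : T → ℂ) (hf : MemLp f 2 ν) (hg : MemLp g 2 ν)
    (hgpos : ∀ᵐ x ∂ν, 0 ≤ g x)
    (hdom : ∃ g₀ : T → ℂ, MemLp g₀ 2 μ ∧
      ∀ φ : SimpleFunc T ℂ,
        ∫ x, φ x * (starRingEnd ℂ) (g₀ x) ∂μ = ∫ x, φ x * (starRingEnd ℂ) (f x) ∂ν) :
    ∃ h : T → ℂ, MemLp h 2 μ ∧
      ∀ φ : SimpleFunc T ℂ,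
        ∫ x, φ x * (starRingEnd ℂ) (h x) ∂μ
          = ∫ x, φ x * ((min (f x).re (g x).re : ℝ) : ℂ) ∂ν := by
  obtain ⟨g₀, hg₀, hadj⟩ := hdom
  set m : T → ℂ := fun x => ((min (f x).re (g x).re : ℝ) : ℂ)
  have hm : MemLp m 2 ν := (hf.re.inf hg.re).ofReal
  have hconj : (fun x => (starRingEnd ℂ) (g₀ x)) =ᵐ[μ]
      fun x => (ν.rnDeriv μ x).toReal • (starRingEnd ℂ) (f x) :=
    ae_eq_rnDeriv_smul_of_integral_simpleFunc_mul_eq hac (hf.star.integrable one_le_two)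
      (hg₀.star.integrable one_le_two) hadj
  have hle : ∀ᵐ x ∂ν, ‖m x‖ ≤ ‖(starRingEnd ℂ) (f x)‖ :=
    hgpos.mono fun x hx => by simpa only [RCLike.norm_conj] using Complex.norm_ofReal_min_re_le hx
  refine ⟨fun x => (ν.rnDeriv μ x).toReal • m x, ?_, fun φ => ?_⟩
  · refine hg₀.of_le ((integrable_rnDeriv_smul_iff hac).2 (hm.integrable one_le_two)).1 ?_
    filter_upwards [ae_norm_rnDeriv_smul_le hle, hconj] with x hx hx'
    rwa [← RCLike.norm_conj (g₀ x), hx']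
  · calc ∫ x, φ x * (starRingEnd ℂ) ((ν.rnDeriv μ x).toReal • m x) ∂μ
        = ∫ x, (ν.rnDeriv μ x).toReal • (φ x * m x) ∂μ := by
          congr 1 with x
          simp only [m, Complex.real_smul, map_mul, Complex.conj_ofReal]
          ring
      _ = ∫ x, φ x * m x ∂ν := integral_rnDeriv_smul hac

/-- **Lemma.** Let `μ, ν` be finite measures with `ν ≪ μ`, and let `J` be the embedding of
the simple functions in `L²(μ)` into `L²(ν)`.  If `f, g ∈ L²(ν)` are ν-a.e. nonnegative and
`f ∈ dom J*`, then the pointwise minimum `f ∧ g` belongs to `dom J*`. -/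
theorem min_mem_dom_adjoint
    {T : Type*} [MeasurableSpace T] (μ ν : Measure T)
    [IsFiniteMeasure μ] [IsFiniteMeasure ν] (hac : ν ≪ μ)
    (f g : T → ℂ) (hf : MemLp f 2 ν) (hg : MemLp g 2 ν)
    (hfpos : ∀ᵐ x ∂ν, 0 ≤ f x) (hgpos : ∀ᵐ x ∂ν, 0 ≤ g x)
    (hdom : ∃ g₀ : T → ℂ, MemLp g₀ 2 μ ∧
      ∀ φ : SimpleFunc T ℂ,
        ∫ x, φ x * (starRingEnd ℂ) (g₀ x) ∂μ = ∫ x, φ x * (starRingEnd ℂ) (f x) ∂ν) :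
    ∃ h : T → ℂ, MemLp h 2 μ ∧
      ∀ φ : SimpleFunc T ℂ,
        ∫ x, φ x * (starRingEnd ℂ) (h x) ∂μ
          = ∫ x, φ x * ((min (f x).re (g x).re : ℝ) : ℂ) ∂ν :=
  min_mem_dom_adjoint_general μ ν hac f g hf hg hgpos hdom
end

section
/- Let v, w be representable positive functionals on a complex *-algebra A such that w is absolutely continuous with respect to v. Then there exists a sequence (a_n) in A such that w(a) = lim_{n→∞} v(a_n* a) for all a ∈ A; moreover the convergence is uniform on the set {a ∈ A : w(a*a) + v(a*a) ≤ 1}, i.e. sup{|w(a) − v(a_n* a)| : a ∈ A, w(a*a) + v(a*a) ≤ 1} → 0 as n → ∞. -/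
open Filter Topology
open scoped ComplexInnerProductSpace ComplexOrder

/-- `w` is absolutely continuous with respect to `v`. -/
def FunctionalAC {A : Type*} [NonUnitalRing A] [StarRing A] (w v : A → ℂ) : Prop :=
  ∀ a : ℕ → A,
    Tendsto (fun n => v (star (a n) * a n)) atTop (𝓝 0) →
    Tendsto (fun p : ℕ × ℕ => w (star (a p.1 - a p.2) * (a p.1 - a p.2))) atTop (𝓝 0) →
    Tendsto (fun n => w (star (a n) * a n)) atTop (𝓝 0)

/-! Let `K` be the closure of `{(πv a ζv, πw a ζw)}` in the Hilbert sum `Hv ⊕ Hw`, let `k_a` be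
the point of `K` given by `a`, and let `I`, `J` be the two coordinate projections on `K`.
Absolute continuity makes `I` injective: a point `(0, y)` of `K` is a limit of pairs
`(πv (a n) ζv, πw (a n) ζw)` whose second coordinates are Cauchy, so `y = 0`. Hence `I†I` has
dense range and we can choose `I†I k_{a n} → J† ζw`. Since `w b = ⟪J† ζw, k_b⟫` and
`v (a⋆b) = ⟪I†I k_a, k_b⟫`, Cauchy–Schwarz gives
`‖w b - v ((a n)⋆b)‖ ≤ ‖J† ζw - I†I k_{a n}‖ ‖k_b‖`, where `‖k_b‖² = v (b⋆b) + w (b⋆b)`. -/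

open scoped InnerProductSpace

namespace ContinuousLinearMap

variable {𝕜 E F : Type*} [RCLike 𝕜] [NormedAddCommGroup E] [InnerProductSpace 𝕜 E]
  [CompleteSpace E] [NormedAddCommGroup F] [InnerProductSpace 𝕜 F] [CompleteSpace F]

theorem denseRange_adjoint_comp_self {T : E →L[𝕜] F} (hT : Function.Injective T) :
    DenseRange (adjoint T ∘L T) := by
  have hclosure : (LinearMap.range (adjoint T ∘L T).toLinearMap).topologicalClosure = ⊤ := by
    rw [Submodule.topologicalClosure_eq_top_iff, orthogonal_range, adjoint_comp, adjoint_adjoint,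
      ker_adjoint_comp_self, LinearMap.ker_eq_bot.mpr hT]
  have hdense := Submodule.dense_iff_topologicalClosure_eq_top.mpr hclosure
  rwa [LinearMap.coe_range] at hdense

end ContinuousLinearMap

section GraphClosable

variable {M F G : Type*} [NormedAddCommGroup F] [NormedAddCommGroup G]

/-- The Hilbert-space form of absolute continuity: the densely defined operator `f m ↦ g m`
is closable. -/
def GraphClosable (f : M → F) (g : M → G) : Prop :=
  ∀ a : ℕ → M, Tendsto (fun n => f (a n)) atTop (𝓝 0) → CauchySeq (fun n => g (a n)) →
    Tendsto (fun n => g (a n)) atTop (𝓝 0)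

theorem GraphClosable.snd_eq_zero_of_mem_closure {f : M → F} {g : M → G}
    (h : GraphClosable f g) {p : F × G} (hp : p ∈ closure (Set.range fun m => (f m, g m)))
    (hp₁ : p.1 = 0) : p.2 = 0 := by
  obtain ⟨x, hx, hxp⟩ := mem_closure_iff_seq_limit.mp hp
  choose a ha using hx
  obtain rfl : (fun n => (f (a n), g (a n))) = x := funext ha
  have hg : Tendsto (fun n => g (a n)) atTop (𝓝 p.2) := (continuous_snd.tendsto p).comp hxp
  refine tendsto_nhds_unique hg (h a ?_ hg.cauchySeq)
  simpa [hp₁, Function.comp_def] using (continuous_fst.tendsto p).comp hxp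

end GraphClosable

namespace LinearMap

variable {𝕜 M F G : Type*} [RCLike 𝕜] [AddCommGroup M] [Module 𝕜 M]
  [NormedAddCommGroup F] [InnerProductSpace 𝕜 F] [NormedAddCommGroup G] [InnerProductSpace 𝕜 G]
  (f : M →ₗ[𝕜] F) (g : M →ₗ[𝕜] G)

def pairL2 : M →ₗ[𝕜] WithLp 2 (F × G) :=
  (WithLp.linearEquiv 2 𝕜 (F × G)).symm.toLinearMap ∘ₗ f.prod g

def pairClosure : Submodule 𝕜 (WithLp 2 (F × G)) :=
  (range (pairL2 f g)).topologicalClosure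

def toPairClosure (m : M) : pairClosure f g :=
  ⟨pairL2 f g m, (range (pairL2 f g)).le_topologicalClosure (mem_range_self _ m)⟩

def pairClosureFst : pairClosure f g →L[𝕜] F :=
  WithLp.fstL 2 𝕜 F G ∘L (pairClosure f g).subtypeL

def pairClosureSnd : pairClosure f g →L[𝕜] G :=
  WithLp.sndL 2 𝕜 F G ∘L (pairClosure f g).subtypeL

@[simp]
theorem pairClosureFst_toPairClosure (m : M) : pairClosureFst f g (toPairClosure f g m) = f m :=
  rfl

@[simp]
theorem pairClosureSnd_toPairClosure (m : M) : pairClosureSnd f g (toPairClosure f g m) = g m :=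
  rfl

theorem norm_toPairClosure (m : M) : ‖toPairClosure f g m‖ = √(‖f m‖ ^ 2 + ‖g m‖ ^ 2) := by
  rw [← Real.sqrt_sq (norm_nonneg (toPairClosure f g m))]
  exact congrArg Real.sqrt (WithLp.prod_norm_sq_eq_of_L2 (pairL2 f g m))

theorem mem_pairClosure_iff {x : WithLp 2 (F × G)} :
    x ∈ pairClosure f g ↔ x ∈ closure (Set.range (pairL2 f g)) := by
  rw [← coe_range, ← Submodule.topologicalClosure_coe]
  rfl

theorem denseRange_toPairClosure : DenseRange (toPairClosure f g) := by
  rw [DenseRange, Topology.IsInducing.subtypeVal.dense_iff, ← Set.range_comp]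
  exact fun k => (mem_pairClosure_iff f g).mp k.2

variable {f g}

theorem _root_.GraphClosable.injective_pairClosureFst (h : GraphClosable f g) :
    Function.Injective (pairClosureFst f g) := by
  refine (injective_iff_map_eq_zero _).mpr fun k hk => ?_
  have hmem : (k : WithLp 2 (F × G)).ofLp ∈ closure (Set.range fun m => (f m, g m)) :=
    map_mem_closure (WithLp.prod_continuous_ofLp 2 F G) ((mem_pairClosure_iff f g).mp k.2)
      (by rintro - ⟨m, rfl⟩; exact ⟨m, rfl⟩)
  have hsnd := h.snd_eq_zero_of_mem_closure hmem hk
  rw [← Submodule.coe_eq_zero, ← WithLp.ofLp_eq_zero]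
  exact Prod.ext hk hsnd

variable [CompleteSpace F] [CompleteSpace G]

instance : CompleteSpace (pairClosure f g) :=
  (range (pairL2 f g)).isClosed_topologicalClosure.completeSpace_coe

theorem _root_.GraphClosable.exists_seq_norm_inner_sub_inner_le (h : GraphClosable f g)
    (y : G) :
    ∃ a : ℕ → M, ∀ (n : ℕ) (m : M),
      ‖⟪y, g m⟫_𝕜 - ⟪f (a n), f m⟫_𝕜‖ ≤ 1 / (n + 1) * √(‖f m‖ ^ 2 + ‖g m‖ ^ 2) := by
  let P := ContinuousLinearMap.adjoint (pairClosureFst f g) ∘L pairClosureFst f g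
  let z := ContinuousLinearMap.adjoint (pairClosureSnd f g) y
  have hdense : DenseRange (P ∘ toPairClosure f g) :=
    (ContinuousLinearMap.denseRange_adjoint_comp_self h.injective_pairClosureFst).comp
      (denseRange_toPairClosure f g) P.continuous
  choose a ha using Metric.mem_closure_range_iff_nat.mp (hdense z)
  refine ⟨a, fun n m => ?_⟩
  have hinner : ⟪y, g m⟫_𝕜 - ⟪f (a n), f m⟫_𝕜 =
      ⟪z - P (toPairClosure f g (a n)), toPairClosure f g m⟫_𝕜 := by
    rw [inner_sub_left, ContinuousLinearMap.comp_apply, ContinuousLinearMap.adjoint_inner_left,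
      ContinuousLinearMap.adjoint_inner_left, pairClosureSnd_toPairClosure,
      pairClosureFst_toPairClosure, pairClosureFst_toPairClosure]
  calc ‖⟪y, g m⟫_𝕜 - ⟪f (a n), f m⟫_𝕜‖
      ≤ ‖z - P (toPairClosure f g (a n))‖ * ‖toPairClosure f g m‖ := by
        rw [hinner]; exact norm_inner_le_norm _ _
    _ ≤ 1 / (n + 1) * √(‖f m‖ ^ 2 + ‖g m‖ ^ 2) := by
        rw [norm_toPairClosure, ← dist_eq_norm]
        exact mul_le_mul_of_nonneg_right (ha n).le (Real.sqrt_nonneg _)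

end LinearMap

theorem tendsto_norm_sq_nhds_zero_iff {ι E : Type*} [SeminormedAddCommGroup E] {l : Filter ι}
    {x : ι → E} : Tendsto (fun i => ‖x i‖ ^ 2) l (𝓝 0) ↔ Tendsto x l (𝓝 0) := by
  rw [tendsto_zero_iff_norm_tendsto_zero (f := x)]
  refine ⟨fun h => ?_, fun h => by simpa using h.pow 2⟩
  simpa [Function.comp_def] using (Real.continuous_sqrt.tendsto 0).comp h

section Representation

variable {𝕜 A H : Type*} [RCLike 𝕜] [NonUnitalRing A] [StarRing A] [Module 𝕜 A]
  [NormedAddCommGroup H] [InnerProductSpace 𝕜 H] [CompleteSpace H]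
  (π : A →⋆ₙₐ[𝕜] (H →L[𝕜] H)) (ζ : H)

noncomputable def NonUnitalStarAlgHom.orbitMap : A →ₗ[𝕜] H where
  toFun a := π a ζ
  map_add' a b := by simp
  map_smul' c a := by simp

theorem inner_apply_star_mul_apply (a b : A) :
    ⟪ζ, π (star a * b) ζ⟫_𝕜 = ⟪π a ζ, π b ζ⟫_𝕜 := by
  rw [map_mul, map_star, ContinuousLinearMap.star_eq_adjoint, mul_apply_eq_comp,
    ContinuousLinearMap.adjoint_inner_right]

theorem tendsto_apply_star_mul_self_nhds_zero_iff {u : A → 𝕜} (hu : ∀ a, u a = ⟪ζ, π a ζ⟫_𝕜)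
    {ι : Type*} {l : Filter ι} {b : ι → A} :
    Tendsto (fun i => u (star (b i) * b i)) l (𝓝 0) ↔ Tendsto (fun i => π (b i) ζ) l (𝓝 0) := by
  simp only [hu, inner_apply_star_mul_apply, inner_self_eq_norm_sq_to_K]
  rw [← tendsto_norm_sq_nhds_zero_iff (x := fun i => π (b i) ζ)]
  exact_mod_cast Filter.tendsto_ofReal_iff' (𝕜 := 𝕜) (l := l) (x := 0)

end Representation

theorem FunctionalAC.graphClosable {A Hv Hw : Type*} [NonUnitalRing A] [StarRing A]
    [Module ℂ A] [NormedAddCommGroup Hv] [InnerProductSpace ℂ Hv] [CompleteSpace Hv]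
    [NormedAddCommGroup Hw] [InnerProductSpace ℂ Hw] [CompleteSpace Hw]
    {πv : A →⋆ₙₐ[ℂ] (Hv →L[ℂ] Hv)} {ζv : Hv} {πw : A →⋆ₙₐ[ℂ] (Hw →L[ℂ] Hw)} {ζw : Hw}
    {v w : A → ℂ} (hv_rep : ∀ a, v a = ⟪ζv, πv a ζv⟫) (hw_rep : ∀ a, w a = ⟪ζw, πw a ζw⟫)
    (hac : FunctionalAC w v) : GraphClosable (fun a => πv a ζv) (fun a => πw a ζw) := by
  intro a hv_zero hw_cauchy
  have hw_diff : Tendsto (fun p : ℕ × ℕ => πw (a p.1 - a p.2) ζw) atTop (𝓝 0) := by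
    rw [tendsto_zero_iff_norm_tendsto_zero]
    simpa [dist_eq_norm] using cauchySeq_iff_tendsto_dist_atTop_0.mp hw_cauchy
  refine (tendsto_apply_star_mul_self_nhds_zero_iff πw ζw hw_rep).mp (hac a ?_ ?_)
  · exact (tendsto_apply_star_mul_self_nhds_zero_iff πv ζv hv_rep).mpr hv_zero
  · exact (tendsto_apply_star_mul_self_nhds_zero_iff πw ζw hw_rep).mpr hw_diff

theorem radon_nikodym_representable_pointwise_general
    {A : Type*} [NonUnitalRing A] [Module ℂ A] [StarRing A]
    (v w : A →ₗ[ℂ] ℂ)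
    {Hv : Type*} [NormedAddCommGroup Hv] [InnerProductSpace ℂ Hv] [CompleteSpace Hv]
    (πv : A →⋆ₙₐ[ℂ] (Hv →L[ℂ] Hv)) (ζv : Hv)
    (hv_rep : ∀ a : A, v a = ⟪ζv, πv a ζv⟫)
    {Hw : Type*} [NormedAddCommGroup Hw] [InnerProductSpace ℂ Hw] [CompleteSpace Hw]
    (πw : A →⋆ₙₐ[ℂ] (Hw →L[ℂ] Hw)) (ζw : Hw)
    (hw_rep : ∀ a : A, w a = ⟪ζw, πw a ζw⟫)
    (hac : FunctionalAC w v) :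
    ∃ a : ℕ → A,
      (∀ b : A, Tendsto (fun n => v (star (a n) * b)) atTop (𝓝 (w b))) ∧
      (∀ ε : ℝ, 0 < ε → ∃ N : ℕ, ∀ n ≥ N, ∀ b : A,
        (w (star b * b)).re + (v (star b * b)).re ≤ 1 →
        ‖w b - v (star (a n) * b)‖ ≤ ε) := by
  obtain ⟨a, ha⟩ := (hac.graphClosable hv_rep hw_rep).exists_seq_norm_inner_sub_inner_le
    (f := πv.orbitMap ζv) (g := πw.orbitMap ζw) ζw
  have hbound : ∀ (n : ℕ) (b : A), ‖w b - v (star (a n) * b)‖ ≤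
      1 / (n + 1) * √((w (star b * b)).re + (v (star b * b)).re) := by
    intro n b
    simp only [hv_rep, hw_rep, inner_apply_star_mul_apply, ← RCLike.re_to_complex,
      inner_self_eq_norm_sq, add_comm (‖πw b ζw‖ ^ 2)]
    exact ha n b
  refine ⟨a, fun b => ?_, fun ε hε => ?_⟩
  · rw [tendsto_iff_norm_sub_tendsto_zero]
    refine squeeze_zero (fun n => norm_nonneg _)
      (fun n => (norm_sub_rev _ _).le.trans (hbound n b)) ?_
    simpa using tendsto_one_div_add_atTop_nhds_zero_nat.mul_const
      √((w (star b * b)).re + (v (star b * b)).re)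
  · obtain ⟨N, hN⟩ := exists_nat_one_div_lt hε
    refine ⟨N, fun n hn b hb => (hbound n b).trans ?_⟩
    calc 1 / (n + 1) * √((w (star b * b)).re + (v (star b * b)).re)
        ≤ 1 / (N + 1) * 1 := by
          gcongr
          exact Real.sqrt_le_one.mpr hb
      _ ≤ ε := by linarith

/-- **Theorem.** Let `v, w` be representable positive functionals on a (not necessarily
unital) complex `*`-algebra `A` with `w` absolutely continuous with respect to `v`.  Then
there is a sequence `(a n)` in `A` such that `w b = lim_n v (star (a n) * b)` for all
`b ∈ A`, uniformly on `{b : w (star b * b) + v (star b * b) ≤ 1}`.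
(Here we witness representability by given cyclic representations `(Hv, πv, ζv)` of `v`
and `(Hw, πw, ζw)` of `w`; the paper-style inner product `⟨·,·⟩`, linear in the first
variable, corresponds to `⟪·,·⟫` with swapped arguments in Mathlib's convention.) -/
theorem radon_nikodym_representable_pointwise
    {A : Type*} [NonUnitalRing A] [Module ℂ A] [SMulCommClass ℂ A A]
    [IsScalarTower ℂ A A] [StarRing A] [StarModule ℂ A]
    (v w : A →ₗ[ℂ] ℂ)
    (hv : ∀ a : A, 0 ≤ v (star a * a)) (hw : ∀ a : A, 0 ≤ w (star a * a))
    {Hv : Type*} [NormedAddCommGroup Hv] [InnerProductSpace ℂ Hv] [CompleteSpace Hv]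
    (πv : A →⋆ₙₐ[ℂ] (Hv →L[ℂ] Hv)) (ζv : Hv)
    (hv_cyc : DenseRange fun a : A => πv a ζv)
    (hv_rep : ∀ a : A, v a = ⟪ζv, πv a ζv⟫)
    {Hw : Type*} [NormedAddCommGroup Hw] [InnerProductSpace ℂ Hw] [CompleteSpace Hw]
    (πw : A →⋆ₙₐ[ℂ] (Hw →L[ℂ] Hw)) (ζw : Hw)
    (hw_cyc : DenseRange fun a : A => πw a ζw)
    (hw_rep : ∀ a : A, w a = ⟪ζw, πw a ζw⟫)
    (hac : FunctionalAC w v) :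
    ∃ a : ℕ → A,
      (∀ b : A, Tendsto (fun n => v (star (a n) * b)) atTop (𝓝 (w b))) ∧
      (∀ ε : ℝ, 0 < ε → ∃ N : ℕ, ∀ n ≥ N, ∀ b : A,
        (w (star b * b)).re + (v (star b * b)).re ≤ 1 →
        ‖w b - v (star (a n) * b)‖ ≤ ε) :=
  radon_nikodym_representable_pointwise_general v w πv ζv hv_rep πw ζw hw_rep hac
end

section
/- Let A be a complex *-algebra, let v, w be representable positive functionals on A, and let (H_v, π_v, ζ_v) be a cyclic representation of v. Then the following are equivalent: (i) there exists C ≥ 0 such that w(a*a) ≤ C v(a*a) for all a ∈ A; (ii) there exists a bounded positive operator S ∈ B(H_v) belonging to the commutant of π_v (i.e. S π_v(a) = π_v(a) S for all a ∈ A) such that w(b*a) = ⟨S π_v(a)ζ_v, π_v(b)ζ_v⟩ for all a, b ∈ A. (Here S corresponds to W², the square of the Radon–Nikodym operator.) -/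
/-!
If `w ≤ C v`, then `‖πw(a)ζw‖ ≤ √C ‖πv(a)ζv‖`, so `πv(a)ζv ↦ πw(a)ζw` extends from the dense
orbit of `ζv` to a bounded `T : Hv → Hw`; density of the orbit makes `T` intertwine `πv` and `πw`,
and `S = T†T` is the required positive operator in the commutant. Conversely
`w(a*a) = ⟨S πv(a)ζv, πv(a)ζv⟩ ≤ ‖S‖ ‖πv(a)ζv‖² = ‖S‖ v(a*a)`.
-/

open scoped InnerProductSpace ComplexInnerProductSpace ComplexOrder
open ContinuousLinearMap (adjoint)

namespace NonUnitalStarAlgHom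

variable {𝕜 A H K : Type*} [RCLike 𝕜] [NonUnitalNonAssocRing A] [Module 𝕜 A]
  [NormedAddCommGroup H] [InnerProductSpace 𝕜 H] [CompleteSpace H]
  [NormedAddCommGroup K] [InnerProductSpace 𝕜 K] [CompleteSpace K]

section Star

variable [Star A]

noncomputable def orbitMap_s15 (π : A →⋆ₙₐ[𝕜] (H →L[𝕜] H)) (ζ : H) : A →ₗ[𝕜] H where
  toFun a := π a ζ
  map_add' a b := by simp
  map_smul' c a := by simp

theorem inner_apply_star_mul (π : A →⋆ₙₐ[𝕜] (H →L[𝕜] H)) (ζ : H) (a b : A) :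
    ⟪ζ, π (star b * a) ζ⟫_𝕜 = ⟪π b ζ, π a ζ⟫_𝕜 := by
  rw [map_mul, mul_apply_eq_comp, map_star, ContinuousLinearMap.star_eq_adjoint,
    ContinuousLinearMap.adjoint_inner_right]

theorem re_apply_star_mul_self {π : A →⋆ₙₐ[𝕜] (H →L[𝕜] H)} {ζ : H} {v : A →ₗ[𝕜] 𝕜}
    (hv : ∀ a, v a = ⟪ζ, π a ζ⟫_𝕜) (a : A) : RCLike.re (v (star a * a)) = ‖π a ζ‖ ^ 2 := by
  rw [hv, inner_apply_star_mul, inner_self_eq_norm_sq]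

theorem comp_eq_comp_of_denseRange {π : A →⋆ₙₐ[𝕜] (H →L[𝕜] H)} {ρ : A →⋆ₙₐ[𝕜] (K →L[𝕜] K)}
    {ζ : H} {η : K} (hζ : DenseRange fun a => π a ζ) {T : H →L[𝕜] K}
    (hT : ∀ a, T (π a ζ) = ρ a η) (a : A) : T ∘L π a = ρ a ∘L T := by
  ext ξ
  refine congrFun (hζ.equalizer (by fun_prop) (by fun_prop) (funext fun b => ?_)) ξ
  simp only [Function.comp_apply, ContinuousLinearMap.comp_apply]
  rw [← mul_apply_eq_comp, ← map_mul, hT, hT, map_mul, mul_apply_eq_comp]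

theorem exists_intertwiner_of_norm_le {π : A →⋆ₙₐ[𝕜] (H →L[𝕜] H)}
    {ρ : A →⋆ₙₐ[𝕜] (K →L[𝕜] K)} {ζ : H} {η : K} (hζ : DenseRange fun a => π a ζ) {C : ℝ}
    (hC : ∀ a, ‖ρ a η‖ ≤ C * ‖π a ζ‖) :
    ∃ T : H →L[𝕜] K, ∀ a, T (π a ζ) = ρ a η :=
  ⟨(orbitMap_s15 ρ η).extendOfNorm (orbitMap_s15 π ζ), LinearMap.extendOfNorm_eq hζ ⟨C, hC⟩⟩

end Star

section InvolutiveStar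

variable [InvolutiveStar A]

theorem adjoint_comp_self_comp_comm {π : A →⋆ₙₐ[𝕜] (H →L[𝕜] H)}
    {ρ : A →⋆ₙₐ[𝕜] (K →L[𝕜] K)} {T : H →L[𝕜] K} (hT : ∀ a, T ∘L π a = ρ a ∘L T) (a : A) :
    (adjoint T ∘L T) ∘L π a = π a ∘L (adjoint T ∘L T) := by
  have hT' : adjoint T ∘L ρ a = π a ∘L adjoint T := by
    simpa only [ContinuousLinearMap.adjoint_comp, ← ContinuousLinearMap.star_eq_adjoint,
      ← map_star, star_star] using congrArg adjoint (hT (star a)).symm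
  rw [ContinuousLinearMap.comp_assoc, hT a, ← ContinuousLinearMap.comp_assoc, hT',
    ContinuousLinearMap.comp_assoc]

end InvolutiveStar

end NonUnitalStarAlgHom

theorem ContinuousLinearMap.re_inner_self_apply_le {𝕜 E : Type*} [RCLike 𝕜]
    [NormedAddCommGroup E] [InnerProductSpace 𝕜 E] (S : E →L[𝕜] E) (x : E) :
    RCLike.re ⟪x, S x⟫_𝕜 ≤ ‖S‖ * ‖x‖ ^ 2 :=
  calc RCLike.re ⟪x, S x⟫_𝕜 ≤ ‖x‖ * ‖S x‖ := re_inner_le_norm _ _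
    _ ≤ ‖x‖ * (‖S‖ * ‖x‖) := by gcongr; exact S.le_opNorm x
    _ = ‖S‖ * ‖x‖ ^ 2 := by ring

-- Mathlib's `⟪x, y⟫` is conjugate-linear in `x`: the paper's `⟨S πv(a)ζv, πv(b)ζv⟩` is
-- `⟪πv b ζv, S (πv a ζv)⟫`.
open NonUnitalStarAlgHom in
theorem domination_iff_bounded_commutant_general
    {A : Type*} [NonUnitalRing A] [Module ℂ A] [SMulCommClass ℂ A A]
    [IsScalarTower ℂ A A] [StarRing A] [StarModule ℂ A]
    (v w : A →ₗ[ℂ] ℂ)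
    {Hv : Type*} [NormedAddCommGroup Hv] [InnerProductSpace ℂ Hv] [CompleteSpace Hv]
    (πv : A →⋆ₙₐ[ℂ] (Hv →L[ℂ] Hv)) (ζv : Hv)
    (hv_cyc : DenseRange fun a : A => πv a ζv)
    (hv_rep : ∀ a : A, v a = ⟪ζv, πv a ζv⟫)
    {Hw : Type*} [NormedAddCommGroup Hw] [InnerProductSpace ℂ Hw] [CompleteSpace Hw]
    (πw : A →⋆ₙₐ[ℂ] (Hw →L[ℂ] Hw)) (ζw : Hw)
    (hw_rep : ∀ a : A, w a = ⟪ζw, πw a ζw⟫) :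
    (∃ C : ℝ, 0 ≤ C ∧ ∀ a : A, (w (star a * a)).re ≤ C * (v (star a * a)).re) ↔
      (∃ S : Hv →L[ℂ] Hv,
        (∀ ξ : Hv, 0 ≤ ⟪ξ, S ξ⟫) ∧
        (∀ (a : A) (ξ : Hv), S (πv a ξ) = πv a (S ξ)) ∧
        (∀ a b : A, w (star b * a) = ⟪πv b ζv, S (πv a ζv)⟫)) := by
  simp only [← RCLike.re_eq_complex_re]
  constructor
  · rintro ⟨C, hC, hwv⟩
    have hnorm (a : A) : ‖πw a ζw‖ ≤ √C * ‖πv a ζv‖ := by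
      refine (pow_le_pow_iff_left₀ (norm_nonneg _) (by positivity) two_ne_zero).1 ?_
      rw [mul_pow, Real.sq_sqrt hC, ← re_apply_star_mul_self hw_rep,
        ← re_apply_star_mul_self hv_rep]
      exact hwv a
    obtain ⟨T, hT⟩ := exists_intertwiner_of_norm_le hv_cyc hnorm
    refine ⟨adjoint T ∘L T, T.isPositive_adjoint_comp_self.inner_nonneg_right,
      fun a ξ => ?_, fun a b => ?_⟩
    · exact congr($(adjoint_comp_self_comp_comm
        (comp_eq_comp_of_denseRange hv_cyc hT) a) ξ)
    · rw [hw_rep, inner_apply_star_mul, ← hT, ← hT, ContinuousLinearMap.comp_apply,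
        ContinuousLinearMap.adjoint_inner_right]
  · rintro ⟨S, -, -, hS⟩
    refine ⟨‖S‖, norm_nonneg S, fun a => ?_⟩
    rw [hS, re_apply_star_mul_self hv_rep]
    exact S.re_inner_self_apply_le _

/-- **Proposition.** Let `v, w` be representable positive functionals on a complex
`*`-algebra `A` and `(Hv, πv, ζv)` a cyclic representation of `v`.  Then `w ≤ C v` for
some `C ≥ 0` iff there is a bounded positive operator `S` in the commutant of `πv` with
`w (star b * a) = ⟨S πv(a) ζv, πv(b) ζv⟩` for all `a, b ∈ A`.
(The paper-style inner product `⟨·,·⟩`, linear in the first variable, corresponds to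
`⟪·,·⟫` with swapped arguments in Mathlib's convention.) -/
theorem domination_iff_bounded_commutant
    {A : Type*} [NonUnitalRing A] [Module ℂ A] [SMulCommClass ℂ A A]
    [IsScalarTower ℂ A A] [StarRing A] [StarModule ℂ A]
    (v w : A →ₗ[ℂ] ℂ)
    (hv : ∀ a : A, 0 ≤ v (star a * a)) (hw : ∀ a : A, 0 ≤ w (star a * a))
    {Hv : Type*} [NormedAddCommGroup Hv] [InnerProductSpace ℂ Hv] [CompleteSpace Hv]
    (πv : A →⋆ₙₐ[ℂ] (Hv →L[ℂ] Hv)) (ζv : Hv)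
    (hv_cyc : DenseRange fun a : A => πv a ζv)
    (hv_rep : ∀ a : A, v a = ⟪ζv, πv a ζv⟫)
    {Hw : Type*} [NormedAddCommGroup Hw] [InnerProductSpace ℂ Hw] [CompleteSpace Hw]
    (πw : A →⋆ₙₐ[ℂ] (Hw →L[ℂ] Hw)) (ζw : Hw)
    (hw_cyc : DenseRange fun a : A => πw a ζw)
    (hw_rep : ∀ a : A, w a = ⟪ζw, πw a ζw⟫) :
    (∃ C : ℝ, 0 ≤ C ∧ ∀ a : A, (w (star a * a)).re ≤ C * (v (star a * a)).re) ↔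
      (∃ S : Hv →L[ℂ] Hv,
        (∀ ξ : Hv, 0 ≤ ⟪ξ, S ξ⟫) ∧
        (∀ (a : A) (ξ : Hv), S (πv a ξ) = πv a (S ξ)) ∧
        (∀ a b : A, w (star b * a) = ⟪πv b ζv, S (πv a ζv)⟫)) :=
  domination_iff_bounded_commutant_general v w πv ζv hv_cyc hv_rep πw ζw hw_rep
end
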